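/- arXiv:2110.06656 — 12 statements merged into one kernel-verified Lean document; each statement's English description precedes it below -/
import Mathlib

section
/- Let X be a finite set of variables and let 𝒞 be a finite family of clauses, each clause being a 3-element subset of X, and let Ĝ be the associated graph. Then there exists an assignment A : X → {0,1} such that every clause c ∈ 𝒞 contains exactly one variable x with A(x) = 1 if and only if Ĝ has a dominating set S with M(v,S) ≤ 1 for every vertex v of Ĝ. -/
def GhatGraph {X C : Type} (clause : C → Finset X) :
    SimpleGraph (X ⊕ X ⊕ C) :=
  SimpleGraph.fromRel (fun a b =>
    (∃ x : X, a = Sum.inl x ∧ b = Sum.inr (Sum.inl x)) ∨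
    (∃ (x : X) (c : C), a = Sum.inl x ∧ b = Sum.inr (Sum.inr c) ∧ x ∈ clause c))

namespace GhatAux

variable {X C : Type} {clause : C → Finset X}

lemma adj_xhat {x y : X} : (GhatGraph clause).Adj (Sum.inl x) (Sum.inr (Sum.inl y)) ↔ x = y := by
  simp [GhatGraph, SimpleGraph.fromRel_adj, eq_comm]

lemma adj_xc {x : X} {c : C} :
    (GhatGraph clause).Adj (Sum.inl x) (Sum.inr (Sum.inr c)) ↔ x ∈ clause c := by
  simp [GhatGraph, SimpleGraph.fromRel_adj]

lemma nadj_ll {x y : X} : ¬ (GhatGraph clause).Adj (Sum.inl x) (Sum.inl y) := by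
  simp [GhatGraph, SimpleGraph.fromRel_adj]

lemma nadj_rr {a b : X ⊕ C} : ¬ (GhatGraph clause).Adj (Sum.inr a) (Sum.inr b) := by
  simp [GhatGraph, SimpleGraph.fromRel_adj]

end GhatAux

open GhatAux in
/-- There is an assignment setting exactly one variable of each clause to true
iff `Ĝ` has a dominating set `S` with `M(v,S) ≤ 1` for every vertex `v`. -/
theorem stmt_0 {X C : Type} [Fintype X] [DecidableEq X] [Fintype C]
    (clause : C → Finset X) (h3 : ∀ c, (clause c).card = 3) :
    (∃ A : X → Bool, ∀ c : C, ∃! x : X, x ∈ clause c ∧ A x = true) ↔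
    (∃ S : Set (X ⊕ X ⊕ C),
      (∀ v, v ∈ S ∨ ∃ u ∈ S, (GhatGraph clause).Adj v u) ∧
      (∀ v, ((insert v ((GhatGraph clause).neighborSet v)) ∩ S).ncard ≤ 1)) := by
  classical
  constructor
  · rintro ⟨A, hA⟩
    refine ⟨{v | match v with
      | Sum.inl x => A x = true
      | Sum.inr (Sum.inl x) => A x = false
      | Sum.inr (Sum.inr _) => False}, ?_, ?_⟩
    · rintro (x | x | c)
      · rcases hAx : A x with _ | _
        · exact Or.inr ⟨Sum.inr (Sum.inl x), hAx, adj_xhat.mpr rfl⟩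
        · exact Or.inl hAx
      · rcases hAx : A x with _ | _
        · exact Or.inl hAx
        · exact Or.inr ⟨Sum.inl x, hAx, (adj_xhat.mpr rfl).symm⟩
      · obtain ⟨x, ⟨hx, hxt⟩, -⟩ := hA c
        exact Or.inr ⟨Sum.inl x, hxt, (adj_xc.mpr hx).symm⟩
    · intro v
      rw [Set.ncard_le_one (Set.toFinite _)]
      rintro a ⟨ha, haS⟩ b ⟨hb, hbS⟩
      -- show each element of the intersection is determined by v
      suffices H : ∀ w, w ∈ insert v ((GhatGraph clause).neighborSet v) →
          w ∈ {v : X ⊕ X ⊕ C | match v with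
            | Sum.inl x => A x = true
            | Sum.inr (Sum.inl x) => A x = false
            | Sum.inr (Sum.inr _) => False} →
          w = (match v with
            | Sum.inl x => if A x then Sum.inl x else Sum.inr (Sum.inl x)
            | Sum.inr (Sum.inl x) => if A x then Sum.inl x else Sum.inr (Sum.inl x)
            | Sum.inr (Sum.inr c) => Sum.inl (hA c).choose) by
        exact (H a ha haS).trans (H b hb hbS).symm
      rintro (x | x | c) hw hwS
      · -- w = inl x : in S means A x = true; must have v = inl x or v = inr inl x
        rcases hw with rfl | hw
        · simp [Set.mem_setOf_eq] at hwS; simp [hwS]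
        · simp only [SimpleGraph.mem_neighborSet] at hw
          rcases v with y | y | c
          · exact absurd hw nadj_ll
          · obtain rfl := (adj_xhat.mp hw.symm).symm
            simp [Set.mem_setOf_eq] at hwS; simp [hwS]
          · have hx : x ∈ clause c := adj_xc.mp hw.symm
            simp only [Set.mem_setOf_eq] at hwS
            have := ((hA c).choose_spec.2 x ⟨hx, hwS⟩)
            simp [this]
      · -- w = inr (inl x) : A x = false
        rcases hw with rfl | hw
        · simp [Set.mem_setOf_eq] at hwS; simp [hwS]
        · simp only [SimpleGraph.mem_neighborSet] at hw
          rcases v with y | y | c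
          · obtain rfl := adj_xhat.mp hw
            simp [Set.mem_setOf_eq] at hwS; simp [hwS]
          · exact absurd hw nadj_rr
          · exact absurd hw nadj_rr
      · exact absurd hwS (by simp [Set.mem_setOf_eq])
  · rintro ⟨S, hdom, hmem⟩
    have hsub : ∀ v, ∀ a ∈ (insert v ((GhatGraph clause).neighborSet v)) ∩ S,
        ∀ b ∈ (insert v ((GhatGraph clause).neighborSet v)) ∩ S, a = b := by
      intro v
      exact (Set.ncard_le_one (Set.toFinite _)).mp (hmem v)
    -- each x has one of inl x, inr inl x in S
    have hkey : ∀ x : X, Sum.inl x ∈ S ∨ Sum.inr (Sum.inl x) ∈ S := by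
      intro x
      rcases hdom (Sum.inr (Sum.inl x)) with h | ⟨u, huS, hadj⟩
      · exact Or.inr h
      · rcases u with y | u
        · obtain rfl := (adj_xhat.mp hadj.symm).symm
          exact Or.inl huS
        · exact absurd hadj nadj_rr
    have hcnot : ∀ c : C, Sum.inr (Sum.inr c) ∉ S := by
      intro c hc
      obtain ⟨x, hx⟩ : (clause c).Nonempty := by
        rw [← Finset.card_pos, h3]; norm_num
      have hmem1 : (Sum.inr (Sum.inr c) : X ⊕ X ⊕ C)
          ∈ (insert (Sum.inl x) ((GhatGraph clause).neighborSet (Sum.inl x))) ∩ S :=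
        ⟨Set.mem_insert_of_mem _ (adj_xc.mpr hx), hc⟩
      rcases hkey x with h | h
      · exact absurd (hsub (Sum.inl x) _ ⟨Set.mem_insert _ _, h⟩ _ hmem1) (by simp)
      · exact absurd (hsub (Sum.inl x) _
          ⟨Set.mem_insert_of_mem _ (adj_xhat.mpr rfl), h⟩ _ hmem1) (by simp)
    refine ⟨fun x => decide (Sum.inl x ∈ S), fun c => ?_⟩
    rcases hdom (Sum.inr (Sum.inr c)) with h | ⟨u, huS, hadj⟩
    · exact absurd h (hcnot c)
    · rcases u with x | u
      · have hx : x ∈ clause c := adj_xc.mp hadj.symm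
        refine ⟨x, ⟨hx, by simpa using huS⟩, ?_⟩
        intro y ⟨hy, hyS⟩
        have hyS' : Sum.inl y ∈ S := by simpa using hyS
        have := hsub (Sum.inr (Sum.inr c)) (Sum.inl y)
          ⟨Set.mem_insert_of_mem _ ((adj_xc.mpr hy).symm), hyS'⟩ (Sum.inl x)
          ⟨Set.mem_insert_of_mem _ ((adj_xc.mpr hx).symm), huS⟩
        exact Sum.inl.injEq _ _ ▸ (by injection this)
      · exact absurd hadj nadj_rr
end

section
/- Let G be a finite simple graph, let n ≥ 0 be an integer, let u and v be adjacent vertices of G, and let W be a set of at least n+2 vertices of G, each distinct from u and v and whose open neighborhood in G is exactly {u, v}. Then every dominating set S of G with M(x,S) ≤ n+1 for every vertex x contains u or contains v. -/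
/-- Let `u` and `v` be adjacent vertices of a finite simple graph `G`, and let `W`
be a set of at least `n+2` vertices, each distinct from `u` and `v` and whose open
neighborhood is exactly `{u, v}`.  Then every dominating set `S` with
`M(x,S) ≤ n+1` for every vertex `x` contains `u` or `v`. -/
theorem stmt_1 {V : Type} [Fintype V] (G : SimpleGraph V) (n : ℕ) (u v : V)
    (huv : G.Adj u v) (W : Set V) (hWcard : n + 2 ≤ W.ncard)
    (hW : ∀ w ∈ W, w ≠ u ∧ w ≠ v ∧ G.neighborSet w = {u, v})
    (S : Set V)
    (hdom : ∀ x, x ∈ S ∨ ∃ y ∈ S, G.Adj x y)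
    (hmem : ∀ x, ((insert x (G.neighborSet x)) ∩ S).ncard ≤ n + 1) :
    u ∈ S ∨ v ∈ S := by
  by_contra h
  push_neg at h
  obtain ⟨hu, hv⟩ := h
  -- every w ∈ W is in S
  have hWS : W ⊆ S := by
    intro w hw
    obtain ⟨hwu, hwv, hN⟩ := hW w hw
    rcases hdom w with hws | ⟨y, hyS, hadj⟩
    · exact hws
    · exfalso
      have : y ∈ G.neighborSet w := hadj
      rw [hN] at this
      rcases this with rfl | rfl
      · exact hu hyS
      · exact hv hyS
  -- every w ∈ W is a neighbor of u
  have hWN : W ⊆ insert u (G.neighborSet u) ∩ S := by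
    intro w hw
    obtain ⟨hwu, hwv, hN⟩ := hW w hw
    refine ⟨Set.mem_insert_of_mem _ ?_, hWS hw⟩
    have : u ∈ G.neighborSet w := by rw [hN]; exact Set.mem_insert _ _
    exact (G.mem_neighborSet _ _).mpr ((G.mem_neighborSet _ _).mp this).symm
  have hfin : (insert u (G.neighborSet u) ∩ S).Finite := Set.toFinite _
  have := Set.ncard_le_ncard hWN hfin
  have := hmem u
  omega
end

section
/- Let G be a finite simple graph, let C be a vertex cover of G (every edge has an endpoint in C), and let I = V(G) \ C. Let D be a k-membership dominating set of G, and set C_1 = D ∩ C, I_1 = I \ N(C_1), and R = N(C_1) ∩ I ∩ D, where N(C_1) is the set of vertices outside C_1 adjacent to some vertex of C_1. Then I_1 ⊆ D, and every vertex of C \ (N[C_1] ∪ N(I_1)) has a neighbor in R. -/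
/-- Let `C` be a vertex cover of a finite simple graph `G`, `I = V \ C`, and let
`D` be a `k`-membership dominating set.  With `C₁ = D ∩ C`, `N(C₁)` the open
neighborhood of `C₁`, `I₁ = I \ N(C₁)`, `N(I₁)` the open neighborhood of `I₁`,
and `R = N(C₁) ∩ I ∩ D`, we have `I₁ ⊆ D` and every vertex of
`C \ (N[C₁] ∪ N(I₁))` has a neighbor in `R`. -/
theorem stmt_2 {V : Type} [Fintype V] (G : SimpleGraph V) (k : ℕ)
    (C : Set V) (hC : ∀ x y, G.Adj x y → x ∈ C ∨ y ∈ C)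
    (D : Set V)
    (hdom : ∀ v, v ∈ D ∨ ∃ u ∈ D, G.Adj v u)
    (hmem : ∀ v, ((insert v (G.neighborSet v)) ∩ D).ncard ≤ k)
    (I C1 NC1 I1 NI1 R : Set V)
    (hI : I = Cᶜ)
    (hC1 : C1 = D ∩ C)
    (hNC1 : NC1 = {v | v ∉ C1 ∧ ∃ u ∈ C1, G.Adj v u})
    (hI1 : I1 = I \ NC1)
    (hNI1 : NI1 = {v | v ∉ I1 ∧ ∃ u ∈ I1, G.Adj v u})
    (hR : R = NC1 ∩ I ∩ D) :
    I1 ⊆ D ∧ ∀ v ∈ C \ ((NC1 ∪ C1) ∪ NI1), ∃ r ∈ R, G.Adj v r := by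
  subst hI hC1 hNC1 hI1 hNI1 hR
  constructor
  · rintro v ⟨hvI, hvN⟩
    by_contra hvD
    rcases hdom v with h | ⟨u, huD, hadj⟩
    · exact hvD h
    · have huC : u ∈ C := by
        rcases hC v u hadj with h | h
        · exact absurd h hvI
        · exact h
      exact hvN ⟨fun h => hvD h.1, u, ⟨huD, huC⟩, hadj⟩
  · rintro v ⟨hvC, hvN⟩
    rcases hdom v with h | ⟨u, huD, hadj⟩
    · exact absurd (Or.inl (Or.inr ⟨h, hvC⟩)) hvN
    by_cases huC : u ∈ C
    · exact absurd (Or.inl (Or.inl ⟨fun h => hvN (Or.inl (Or.inr h)),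
        u, ⟨huD, huC⟩, hadj⟩)) hvN
    by_cases huN : u ∈ {v | v ∉ (D ∩ C) ∧ ∃ w ∈ D ∩ C, G.Adj v w}
    · exact ⟨u, ⟨⟨huN, huC⟩, huD⟩, hadj⟩
    · have huI1 : u ∈ Cᶜ \ {v | v ∉ (D ∩ C) ∧ ∃ w ∈ D ∩ C, G.Adj v w} :=
        ⟨huC, huN⟩
      have hvI1 : v ∉ Cᶜ \ {v | v ∉ (D ∩ C) ∧ ∃ w ∈ D ∩ C, G.Adj v w} :=
        fun h => h.1 hvC
      exact absurd (Or.inr ⟨hvI1, u, huI1, hadj⟩) hvN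
end

section
/- Let k, G, V_1, …, V_k and H be as in the context. If G has a multicolored independent set, then H has a dominating set S with M(v,S) ≤ k for every vertex v of H. -/
namespace MISRed

/-- Index type for the edge vertices `x_{uv}`: ordered pairs `(u,v)` of adjacent
vertices of `G` whose colors satisfy `c u < c v`. -/
abbrev EdgeX {V : Type} {k : ℕ} (G : SimpleGraph V) (c : V → Fin k) : Type :=
  {p : V × V // G.Adj p.1 p.2 ∧ c p.1 < c p.2}

/-- Vertex set of the split graph `H`: the original vertices of `G`, the new
vertex `w`, the sets `U_i` (each of size `k+1`), and the edge vertices. -/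
abbrev VHmis (V : Type) (k : ℕ) (G : SimpleGraph V) (c : V → Fin k) : Type :=
  V ⊕ (Unit ⊕ ((Fin k × Fin (k + 1)) ⊕ EdgeX G c))

variable {V : Type} {k : ℕ}

/-- The vertex of `H` corresponding to a vertex `u` of `G`. -/
def orig (G : SimpleGraph V) (c : V → Fin k) (u : V) : VHmis V k G c := Sum.inl u

/-- The special clique vertex `w`. -/
def wV (G : SimpleGraph V) (c : V → Fin k) : VHmis V k G c := Sum.inr (Sum.inl ())

/-- The `j`-th vertex of `U_i`. -/
def uV (G : SimpleGraph V) (c : V → Fin k) (i : Fin k) (j : Fin (k + 1)) :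
    VHmis V k G c := Sum.inr (Sum.inr (Sum.inl (i, j)))

/-- The edge vertex `x_{uv}` for the edge `e`. -/
def xV (G : SimpleGraph V) (c : V → Fin k) (e : EdgeX G c) : VHmis V k G c :=
  Sum.inr (Sum.inr (Sum.inr e))

/-- The adjacency-generating relation of `H`: `V(G) ∪ {w}` is a clique, each
vertex of `U_i` is adjacent to every vertex of color `i`, `w` is adjacent to
all edge vertices, and `x_{uv}` (where `u ∈ V_p`, `v ∈ V_q`) is adjacent to
every vertex of `(V_p \ {u}) ∪ (V_q \ {v})`. -/
def rMIS (V : Type) (k : ℕ) (G : SimpleGraph V) (c : V → Fin k) :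
    VHmis V k G c → VHmis V k G c → Prop := fun a b =>
  (∃ u v : V, a = orig G c u ∧ b = orig G c v) ∨
  (∃ u : V, a = orig G c u ∧ b = wV G c) ∨
  (∃ (u : V) (i : Fin k) (j : Fin (k + 1)), a = orig G c u ∧ b = uV G c i j ∧ c u = i) ∨
  (∃ (u : V) (e : EdgeX G c), a = orig G c u ∧ b = xV G c e ∧
    ((c u = c e.1.1 ∧ u ≠ e.1.1) ∨ (c u = c e.1.2 ∧ u ≠ e.1.2))) ∨
  (∃ e : EdgeX G c, a = wV G c ∧ b = xV G c e)

/-- The split graph `H` of the reduction. -/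
def Hmis (V : Type) (k : ℕ) (G : SimpleGraph V) (c : V → Fin k) :
    SimpleGraph (VHmis V k G c) := SimpleGraph.fromRel (rMIS V k G c)

/-- `S` is a dominating set of `H`. -/
def IsDom {W : Type*} (H : SimpleGraph W) (S : Set W) : Prop :=
  ∀ v, v ∈ S ∨ ∃ u ∈ S, H.Adj v u

/-- Every vertex has membership `M(v,S) = |N[v] ∩ S|` at most `b`. -/
def MembLE {W : Type*} (H : SimpleGraph W) (S : Set W) (b : ℕ) : Prop :=
  ∀ v, ((insert v (H.neighborSet v)) ∩ S).ncard ≤ b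

end MISRed

open MISRed in
/-- If `G` (colored by the surjection `c` onto `Fin k`) has a multicolored
independent set, then `H` has a dominating set `S` with `M(v,S) ≤ k` for every
vertex `v` of `H`. -/
theorem stmt_3 {V : Type} [Fintype V] (k : ℕ) (hk : 1 ≤ k)
    (G : SimpleGraph V) (c : V → Fin k) (hc : Function.Surjective c)
    (hmis : ∃ f : Fin k → V, (∀ i, c (f i) = i) ∧
      ∀ i j, i ≠ j → ¬ G.Adj (f i) (f j)) :
    ∃ S : Set (VHmis V k G c),
      IsDom (Hmis V k G c) S ∧ MembLE (Hmis V k G c) S k := by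
  classical
  obtain ⟨f, hcf, hind⟩ := hmis
  set S : Set (VHmis V k G c) := Set.range (fun i => orig G c (f i)) with hS
  refine ⟨S, ?_, ?_⟩
  · intro v
    have hadj : ∀ (a b : VHmis V k G c), a ≠ b → rMIS V k G c a b ∨ rMIS V k G c b a →
        (Hmis V k G c).Adj a b := by
      intro a b h1 h2
      exact (SimpleGraph.fromRel_adj _ a b).2 ⟨h1, h2⟩
    match v with
    | Sum.inl u =>
      by_cases hu : u = f (c u)
      · left
        exact ⟨c u, by show Sum.inl (f (c u)) = Sum.inl u; rw [← hu]⟩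
      · right
        refine ⟨orig G c (f (c u)), ⟨c u, rfl⟩, hadj _ _ ?_ ?_⟩
        · simpa [orig] using hu
        · exact Or.inl (Or.inl ⟨u, f (c u), rfl, rfl⟩)
    | Sum.inr (Sum.inl ()) =>
      right
      refine ⟨orig G c (f ⟨0, hk⟩), ⟨_, rfl⟩, hadj _ _ ?_ ?_⟩
      · simp [orig, wV]
      · exact Or.inr (Or.inr (Or.inl ⟨f ⟨0, hk⟩, rfl, rfl⟩))
    | Sum.inr (Sum.inr (Sum.inl (i, j))) =>
      right
      refine ⟨orig G c (f i), ⟨_, rfl⟩, hadj _ _ ?_ ?_⟩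
      · simp [orig, uV]
      · exact Or.inr (Or.inr (Or.inr (Or.inl ⟨f i, i, j, rfl, rfl, hcf i⟩)))
    | Sum.inr (Sum.inr (Sum.inr e)) =>
      obtain ⟨⟨u, v⟩, he, hlt⟩ := e
      right
      have hne : c u ≠ c v := ne_of_lt hlt
      have hnb : ¬ (f (c u) = u ∧ f (c v) = v) := by
        rintro ⟨h1, h2⟩
        exact hind (c u) (c v) hne (by rw [h1, h2]; exact he)
      by_cases h1 : f (c u) = u
      · have h2 : f (c v) ≠ v := fun h => hnb ⟨h1, h⟩
        refine ⟨orig G c (f (c v)), ⟨_, rfl⟩, hadj _ _ ?_ ?_⟩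
        · simp [orig, xV]
        · exact Or.inr (Or.inr (Or.inr (Or.inr (Or.inl
            ⟨f (c v), ⟨(u, v), he, hlt⟩, rfl, rfl, Or.inr ⟨by rw [hcf], h2⟩⟩))))
      · refine ⟨orig G c (f (c u)), ⟨_, rfl⟩, hadj _ _ ?_ ?_⟩
        · simp [orig, xV]
        · exact Or.inr (Or.inr (Or.inr (Or.inr (Or.inl
            ⟨f (c u), ⟨(u, v), he, hlt⟩, rfl, rfl, Or.inl ⟨by rw [hcf], h1⟩⟩))))
  · intro v
    calc ((insert v ((Hmis V k G c).neighborSet v)) ∩ S).ncard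
        ≤ S.ncard := Set.ncard_le_ncard Set.inter_subset_right (Set.finite_range _)
      _ ≤ (Set.univ : Set (Fin k)).ncard := by
          rw [hS, ← Set.image_univ]
          exact Set.ncard_image_le Set.finite_univ
      _ = k := by simp [Set.ncard_univ]
end

section
/- Let k, G, V_1, …, V_k and H be as in the context. If H has a dominating set S with M(v,S) ≤ k for every vertex v of H, then G has a multicolored independent set. -/
section AuxMIS
open MISRed

variable {V : Type} {k : ℕ} {G : SimpleGraph V} {c : V → Fin k}

lemma adj_orig_wV (u : V) : (Hmis V k G c).Adj (orig G c u) (wV G c) := by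
  rw [Hmis, SimpleGraph.fromRel_adj]
  exact ⟨by simp [orig, wV], Or.inl (Or.inr (Or.inl ⟨u, rfl, rfl⟩))⟩

lemma adj_orig_uV (u : V) (i : Fin k) (j : Fin (k+1)) (h : c u = i) :
    (Hmis V k G c).Adj (orig G c u) (uV G c i j) := by
  rw [Hmis, SimpleGraph.fromRel_adj]
  exact ⟨by simp [orig, uV], Or.inl (Or.inr (Or.inr (Or.inl ⟨u, i, j, rfl, rfl, h⟩)))⟩

lemma adj_wV_xV (e : EdgeX G c) : (Hmis V k G c).Adj (wV G c) (xV G c e) := by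
  rw [Hmis, SimpleGraph.fromRel_adj]
  exact ⟨by simp [wV, xV], Or.inl (Or.inr (Or.inr (Or.inr (Or.inr ⟨e, rfl, rfl⟩))))⟩

lemma neighbor_uV {i : Fin k} {j : Fin (k+1)} {b : VHmis V k G c}
    (h : (Hmis V k G c).Adj (uV G c i j) b) : ∃ u, b = orig G c u ∧ c u = i := by
  rw [Hmis, SimpleGraph.fromRel_adj] at h
  obtain ⟨-, h | h⟩ := h
  · rcases h with ⟨u, v, h1, -⟩ | ⟨u, h1, -⟩ | ⟨u, i', j', h1, -⟩ | ⟨u, e, h1, -⟩ | ⟨e, h1, -⟩ <;>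
      simp [uV, orig, wV] at h1
  · rcases h with ⟨u, v, -, h2⟩ | ⟨u, -, h2⟩ | ⟨u, i', j', h1, h2, h3⟩ | ⟨u, e, -, h2, -⟩ | ⟨e, -, h2⟩
    · simp [uV, orig] at h2
    · simp [uV, wV] at h2
    · simp only [uV, Sum.inr.injEq, Sum.inl.injEq, Prod.mk.injEq] at h2
      exact ⟨u, h1, by rw [h3, h2.1]⟩
    · simp [uV, xV] at h2
    · simp [uV, xV] at h2

lemma neighbor_xV {e : EdgeX G c} {b : VHmis V k G c}
    (h : (Hmis V k G c).Adj (xV G c e) b) :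
    b = wV G c ∨ ∃ u, b = orig G c u ∧
      ((c u = c e.1.1 ∧ u ≠ e.1.1) ∨ (c u = c e.1.2 ∧ u ≠ e.1.2)) := by
  rw [Hmis, SimpleGraph.fromRel_adj] at h
  obtain ⟨-, h | h⟩ := h
  · rcases h with ⟨u, v, h1, -⟩ | ⟨u, h1, -⟩ | ⟨u, i', j', h1, -⟩ | ⟨u, e', h1, -⟩ | ⟨e', h1, -⟩ <;>
      simp [xV, orig, wV] at h1
  · rcases h with ⟨u, v, -, h2⟩ | ⟨u, -, h2⟩ | ⟨u, i', j', -, h2, -⟩ | ⟨u, e', h1, h2, h3⟩ | ⟨e', h1, h2⟩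
    · simp [xV, orig] at h2
    · simp [xV, wV] at h2
    · simp [xV, uV] at h2
    · simp only [xV, Sum.inr.injEq] at h2
      subst h2
      exact Or.inr ⟨u, h1, h3⟩
    · exact Or.inl h1

end AuxMIS

open MISRed in
/-- If `H` has a dominating set `S` with `M(v,S) ≤ k` for every vertex `v` of
`H`, then `G` has a multicolored independent set. -/
theorem stmt_4 {V : Type} [Fintype V] (k : ℕ) (hk : 1 ≤ k)
    (G : SimpleGraph V) (c : V → Fin k) (hc : Function.Surjective c)
    (hmds : ∃ S : Set (VHmis V k G c),
      IsDom (Hmis V k G c) S ∧ MembLE (Hmis V k G c) S k) :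
    ∃ f : Fin k → V, (∀ i, c (f i) = i) ∧
      ∀ i j, i ≠ j → ¬ G.Adj (f i) (f j) := by
  classical
  obtain ⟨S, hdom, hmem⟩ := hmds
  -- Step 1: each color class meets S
  have step1 : ∀ i : Fin k, ∃ v, c v = i ∧ orig G c v ∈ S := by
    intro i
    by_contra hno
    push_neg at hno
    have hU : ∀ j : Fin (k+1), uV G c i j ∈ S := by
      intro j
      rcases hdom (uV G c i j) with h | ⟨b, hbS, hadj⟩
      · exact h
      · obtain ⟨u, rfl, hcu⟩ := neighbor_uV hadj
        exact absurd hbS (hno u hcu)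
    obtain ⟨v, hv⟩ := hc i
    have hsub : Set.range (fun j : Fin (k+1) => uV G c i j) ⊆
        (insert (orig G c v) ((Hmis V k G c).neighborSet (orig G c v))) ∩ S := by
      rintro _ ⟨j, rfl⟩
      exact ⟨Set.mem_insert_of_mem _ (adj_orig_uV v i j hv), hU j⟩
    have hinj : Function.Injective (fun j : Fin (k+1) => uV G c i j) := by
      intro a b h
      simpa [uV] using h
    have hcard : (Set.range (fun j : Fin (k+1) => uV G c i j)).ncard = k + 1 := by
      rw [← Nat.card_coe_set_eq, Nat.card_range_of_injective hinj, Nat.card_eq_fintype_card,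
        Fintype.card_fin]
    have := Set.ncard_le_ncard hsub (Set.toFinite _)
    rw [hcard] at this
    exact absurd (this.trans (hmem (orig G c v))) (by omega)
  choose g hg hgS using step1
  -- Step 2: N[w] ∩ S = range (orig ∘ g)
  set T := (insert (wV G c) ((Hmis V k G c).neighborSet (wV G c))) ∩ S with hT
  have hsub : Set.range (fun i => orig G c (g i)) ⊆ T := by
    rintro _ ⟨i, rfl⟩
    exact ⟨Set.mem_insert_of_mem _ ((adj_orig_wV (g i)).symm), hgS i⟩
  have hinj : Function.Injective (fun i => orig G c (g i)) := by
    intro a b h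
    have : g a = g b := by simpa [orig] using h
    rw [← hg a, ← hg b, this]
  have hcard : (Set.range (fun i => orig G c (g i))).ncard = k := by
    rw [← Nat.card_coe_set_eq, Nat.card_range_of_injective hinj, Nat.card_eq_fintype_card,
      Fintype.card_fin]
  have hTeq : Set.range (fun i => orig G c (g i)) = T := by
    apply Set.eq_of_subset_of_ncard_le hsub _ (Set.toFinite _)
    rw [hcard]; exact hmem (wV G c)
  have hwS : wV G c ∉ S := by
    intro h
    have : wV G c ∈ T := ⟨Set.mem_insert _ _, h⟩
    rw [← hTeq] at this
    obtain ⟨i, hi⟩ := this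
    simp [orig, wV] at hi
  have hxS : ∀ e : EdgeX G c, xV G c e ∉ S := by
    intro e h
    have : xV G c e ∈ T := ⟨Set.mem_insert_of_mem _ (adj_wV_xV e), h⟩
    rw [← hTeq] at this
    obtain ⟨i, hi⟩ := this
    simp [orig, xV] at hi
  have horigS : ∀ u : V, orig G c u ∈ S → ∃ i, u = g i := by
    intro u h
    have : orig G c u ∈ T := ⟨Set.mem_insert_of_mem _ ((adj_orig_wV u).symm), h⟩
    rw [← hTeq] at this
    obtain ⟨i, hi⟩ := this
    exact ⟨i, by simpa [orig] using hi.symm⟩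
  -- Step 3: independence
  have key : ∀ i j : Fin k, i < j → ¬ G.Adj (g i) (g j) := by
    intro i j hij hadj
    have hlt : c (g i) < c (g j) := by rw [hg i, hg j]; exact hij
    set e : EdgeX G c := ⟨(g i, g j), hadj, hlt⟩ with he
    rcases hdom (xV G c e) with h | ⟨b, hbS, hadjb⟩
    · exact hxS e h
    · rcases neighbor_xV hadjb with rfl | ⟨u, rfl, hcond⟩
      · exact hwS hbS
      · obtain ⟨p, rfl⟩ := horigS u hbS
        rcases hcond with ⟨h1, h2⟩ | ⟨h1, h2⟩
        · have : p = i := by rw [← hg p, h1, he]; exact hg i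
          exact h2 (by rw [this])
        · have : p = j := by rw [← hg p, h1, he]; exact hg j
          exact h2 (by rw [this])
  refine ⟨g, hg, fun i j hij hadj => ?_⟩
  rcases lt_or_gt_of_ne hij with h | h
  · exact key i j h hadj
  · exact key j i h hadj.symm
end

section
/- Let k, G, V_1, …, V_k and H be as in the context. Every dominating set S of H with M(v,S) ≤ k for every vertex v of H satisfies |S ∩ V_i| = 1 for every i ∈ {1, …, k}. -/
open MISRed in
/-- Every dominating set `S` of `H` with `M(v,S) ≤ k` for every vertex `v`
satisfies `|S ∩ V_i| = 1` for every color class `i`. -/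
theorem stmt_5 {V : Type} [Fintype V] (k : ℕ) (hk : 1 ≤ k)
    (G : SimpleGraph V) (c : V → Fin k) (hc : Function.Surjective c)
    (S : Set (VHmis V k G c))
    (hS : IsDom (Hmis V k G c) S) (hM : MembLE (Hmis V k G c) S k) :
    ∀ i : Fin k, (S ∩ {v | ∃ u : V, c u = i ∧ v = orig G c u}).ncard = 1 := by
  classical
  set A : Fin k → Set (VHmis V k G c) :=
    fun j => S ∩ {v | ∃ u : V, c u = j ∧ v = orig G c u} with hAdef
  have hdisj : ∀ j j' x, x ∈ A j → x ∈ A j' → j = j' := by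
    intro j j' x hx hx'
    obtain ⟨-, u, hu, rfl⟩ := hx
    obtain ⟨-, u', hu', hx'⟩ := hx'
    have huu : u = u' := by simpa [orig] using hx'
    rw [← hu, ← hu', huu]
  have hadjw : ∀ u : V, (Hmis V k G c).Adj (wV G c) (orig G c u) := by
    intro u
    rw [Hmis, SimpleGraph.fromRel_adj]
    exact ⟨by simp [wV, orig], Or.inr (Or.inr (Or.inl ⟨u, rfl, rfl⟩))⟩
  have hadjuV : ∀ (v : V) (j : Fin k) (m : Fin (k + 1)), c v = j →
      (Hmis V k G c).Adj (orig G c v) (uV G c j m) := by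
    intro v j m hcv
    rw [Hmis, SimpleGraph.fromRel_adj]
    exact ⟨by simp [uV, orig],
      Or.inl (Or.inr (Or.inr (Or.inl ⟨v, j, m, rfl, rfl, hcv⟩)))⟩
  have hne : ∀ j : Fin k, (A j).Nonempty := by
    intro j
    by_contra hemp
    rw [Set.not_nonempty_iff_eq_empty] at hemp
    have hU : ∀ m : Fin (k + 1), uV G c j m ∈ S := by
      intro m
      rcases hS (uV G c j m) with h | ⟨x, hxS, hadj⟩
      · exact h
      exfalso
      rw [Hmis, SimpleGraph.fromRel_adj] at hadj
      obtain ⟨-, hr | hr⟩ := hadj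
      · rcases hr with ⟨u, v', h1, h2⟩ | ⟨u, h1, h2⟩ | ⟨u, i', j', h1, h2, h3⟩ |
          ⟨u, e, h1, h2, h3⟩ | ⟨e, h1, h2⟩ <;> simp [orig, uV, wV, xV] at h1
      · rcases hr with ⟨u, v', h1, h2⟩ | ⟨u, h1, h2⟩ | ⟨u, i', j', h1, h2, h3⟩ |
          ⟨u, e, h1, h2, h3⟩ | ⟨e, h1, h2⟩
        · simp [orig, uV] at h2
        · simp [wV, uV] at h2
        · simp only [uV, Sum.inr.injEq, Sum.inl.injEq, Prod.mk.injEq] at h2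
          have hxA : x ∈ A j := ⟨hxS, u, by rw [h3, ← h2.1], h1⟩
          rw [hemp] at hxA; exact hxA
        · simp [xV, uV] at h2
        · simp [xV, uV] at h2
    obtain ⟨v, hv⟩ := hc j
    have hsub : Set.range (fun m : Fin (k + 1) => uV G c j m) ⊆
        (insert (orig G c v) ((Hmis V k G c).neighborSet (orig G c v))) ∩ S := by
      rintro x ⟨m, rfl⟩
      exact ⟨Set.mem_insert_of_mem _ (hadjuV v j m hv), hU m⟩
    have hinj : Function.Injective (fun m : Fin (k + 1) => uV G c j m) := by
      intro m m' h
      simpa [uV] using h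
    have h1 : (Set.range fun m : Fin (k + 1) => uV G c j m).ncard = k + 1 := by
      rw [← Set.image_univ, Set.ncard_image_of_injective _ hinj, Set.ncard_univ,
        Nat.card_eq_fintype_card, Fintype.card_fin]
    have h2 := Set.ncard_le_ncard hsub (Set.toFinite _)
    have h3 := hM (orig G c v)
    rw [h1] at h2
    omega
  intro i
  obtain ⟨a, ha⟩ := hne i
  have huniq : ∀ b ∈ A i, b = a := by
    intro b hb
    by_contra hab
    set f : Fin k → VHmis V k G c := fun j => if j = i then a else (hne j).some with hf
    have hfA : ∀ j, f j ∈ A j := by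
      intro j
      by_cases h : j = i
      · subst h; simpa [hf] using ha
      · simpa [hf, h] using (hne j).some_mem
    have hfinj : Function.Injective f := by
      intro j j' h
      exact hdisj j j' (f j) (hfA j) (by rw [h]; exact hfA j')
    have hbne : b ∉ Set.range f := by
      rintro ⟨j, hj⟩
      have hji : j = i := hdisj j i b (hj ▸ hfA j) hb
      rw [hji] at hj
      simp [hf] at hj
      exact hab hj.symm
    have hsub : insert b (Set.range f) ⊆
        (insert (wV G c) ((Hmis V k G c).neighborSet (wV G c))) ∩ S := by
      intro x hx
      have hx' : ∃ j, x ∈ A j := by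
        rcases hx with rfl | ⟨j, rfl⟩
        · exact ⟨i, hb⟩
        · exact ⟨j, hfA j⟩
      obtain ⟨j, hxS, u, hcu, rfl⟩ := hx'
      exact ⟨Set.mem_insert_of_mem _ (hadjw u), hxS⟩
    have h1 : (insert b (Set.range f)).ncard = k + 1 := by
      rw [Set.ncard_insert_of_notMem hbne (Set.toFinite _), ← Set.image_univ,
        Set.ncard_image_of_injective _ hfinj, Set.ncard_univ,
        Nat.card_eq_fintype_card, Fintype.card_fin]
    have h2 := Set.ncard_le_ncard hsub (Set.toFinite _)
    have h3 := hM (wV G c)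
    rw [h1] at h2
    omega
  have : S ∩ {v | ∃ u : V, c u = i ∧ v = orig G c u} = A i := by rw [hAdef]
  rw [this, Set.ncard_eq_one]
  exact ⟨a, Set.eq_singleton_iff_unique_mem.mpr ⟨ha, huniq⟩⟩
end

section
/- Let k, G, V_1, …, V_k and H be as in the context. Every dominating set S of H with M(v,S) ≤ k for every vertex v of H satisfies w ∉ S. -/
namespace MISRed

variable {V : Type} {k : ℕ}

variable {G : SimpleGraph V} {c : V → Fin k}

lemma adj_orig_w (u : V) : (Hmis V k G c).Adj (orig G c u) (wV G c) := by
  rw [Hmis, SimpleGraph.fromRel_adj]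
  exact ⟨by simp [orig, wV], Or.inl (Or.inr (Or.inl ⟨u, rfl, rfl⟩))⟩

lemma adj_orig_orig {u v : V} (h : u ≠ v) :
    (Hmis V k G c).Adj (orig G c u) (orig G c v) := by
  rw [Hmis, SimpleGraph.fromRel_adj]
  exact ⟨by simp [orig, h], Or.inl (Or.inl ⟨u, v, rfl, rfl⟩)⟩

lemma adj_orig_uV {u : V} {i : Fin k} (j : Fin (k + 1)) (h : c u = i) :
    (Hmis V k G c).Adj (orig G c u) (uV G c i j) := by
  rw [Hmis, SimpleGraph.fromRel_adj]
  exact ⟨by simp [orig, uV], Or.inl (Or.inr (Or.inr (Or.inl ⟨u, i, j, rfl, rfl, h⟩)))⟩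

lemma uV_adj {i : Fin k} {j : Fin (k + 1)} {x : VHmis V k G c}
    (h : (Hmis V k G c).Adj (uV G c i j) x) : ∃ u, x = orig G c u ∧ c u = i := by
  rw [Hmis, SimpleGraph.fromRel_adj] at h
  obtain ⟨hne, h | h⟩ := h
  · rcases h with ⟨u, v, ha, hb⟩ | ⟨u, ha, hb⟩ | ⟨u, i', j', ha, hb, hcu⟩ |
      ⟨u, e, ha, hb, _⟩ | ⟨e, ha, hb⟩ <;> simp [orig, wV, uV, xV] at ha
  · rcases h with ⟨u, v, ha, hb⟩ | ⟨u, ha, hb⟩ | ⟨u, i', j', ha, hb, hcu⟩ |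
      ⟨u, e, ha, hb, _⟩ | ⟨e, ha, hb⟩
    · simp [orig, wV, uV, xV] at hb
    · simp [orig, wV, uV, xV] at hb
    · simp only [uV, Sum.inr.injEq, Sum.inl.injEq, Prod.mk.injEq] at hb
      exact ⟨u, ha, hb.1 ▸ hcu⟩
    · simp [orig, wV, uV, xV] at hb
    · simp [orig, wV, uV, xV] at hb

end MISRed

open MISRed in
/-- Every dominating set `S` of `H` with `M(v,S) ≤ k` for every vertex `v`
satisfies `w ∉ S`. -/
theorem stmt_6 {V : Type} [Fintype V] (k : ℕ) (hk : 1 ≤ k)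
    (G : SimpleGraph V) (c : V → Fin k) (hc : Function.Surjective c)
    (S : Set (VHmis V k G c))
    (hS : IsDom (Hmis V k G c) S) (hM : MembLE (Hmis V k G c) S k) :
    wV G c ∉ S := by
  intro hw
  by_cases hA : ∀ i : Fin k, ∃ u : V, c u = i ∧ orig G c u ∈ S
  · -- choose one vertex of each color in S
    choose f hf1 hf2 using hA
    have hfinj : Function.Injective f := fun a b h => by
      rw [← hf1 a, ← hf1 b, h]
    set i0 : Fin k := ⟨0, hk⟩
    set vv : VHmis V k G c := orig G c (f i0) with hvv
    set T : Set (VHmis V k G c) :=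
      insert (wV G c) (Set.range fun i => orig G c (f i)) with hT
    have hsub : T ⊆ (insert vv ((Hmis V k G c).neighborSet vv)) ∩ S := by
      rintro x (rfl | ⟨i, rfl⟩)
      · exact ⟨Or.inr (adj_orig_w (f i0)), hw⟩
      · refine ⟨?_, hf2 i⟩
        by_cases hi : f i = f i0
        · exact Or.inl (show orig G c (f i) = vv by rw [hi])
        · exact Or.inr ((Hmis V k G c).adj_symm (adj_orig_orig hi))
    have hcard : T.ncard = k + 1 := by
      have hinj : Function.Injective (fun i => orig G c (f i)) := by
        intro a b h
        exact hfinj (Sum.inl.injEq _ _ ▸ h)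
      have hnm : wV G c ∉ Set.range fun i => orig G c (f i) := by
        rintro ⟨i, h⟩; simp [orig, wV] at h
      rw [hT, Set.ncard_insert_of_notMem hnm (Set.toFinite _), ← Set.image_univ,
        Set.ncard_image_of_injective _ hinj, Set.ncard_univ, Nat.card_eq_fintype_card,
        Fintype.card_fin]
    have := (hM vv).trans_lt (Nat.lt_succ_self k)
    have hle : T.ncard ≤ ((insert vv ((Hmis V k G c).neighborSet vv)) ∩ S).ncard :=
      Set.ncard_le_ncard hsub (Set.toFinite _)
    omega
  · push_neg at hA
    obtain ⟨i, hi⟩ := hA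
    obtain ⟨u0, hu0⟩ := hc i
    -- every vertex of U_i must be in S
    have hU : ∀ j : Fin (k + 1), uV G c i j ∈ S := by
      intro j
      rcases hS (uV G c i j) with h | ⟨y, hyS, hadj⟩
      · exact h
      · obtain ⟨u, rfl, hcu⟩ := uV_adj hadj
        exact absurd hyS (hi u hcu)
    set vv : VHmis V k G c := orig G c u0 with hvv
    set T : Set (VHmis V k G c) :=
      insert (wV G c) (Set.range fun j : Fin (k + 1) => uV G c i j) with hT
    have hsub : T ⊆ (insert vv ((Hmis V k G c).neighborSet vv)) ∩ S := by
      rintro x (rfl | ⟨j, rfl⟩)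
      · exact ⟨Or.inr (adj_orig_w u0), hw⟩
      · exact ⟨Or.inr (adj_orig_uV j hu0), hU j⟩
    have hcard : T.ncard = k + 2 := by
      have hinj : Function.Injective (fun j : Fin (k + 1) => uV G c i j) := by
        intro a b h
        simpa [uV] using h
      have hnm : wV G c ∉ Set.range fun j : Fin (k + 1) => uV G c i j := by
        rintro ⟨j, h⟩; simp [uV, wV] at h
      rw [hT, Set.ncard_insert_of_notMem hnm (Set.toFinite _), ← Set.image_univ,
        Set.ncard_image_of_injective _ hinj, Set.ncard_univ, Nat.card_eq_fintype_card,
        Fintype.card_fin]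
    have := hM vv
    have hle : T.ncard ≤ ((insert vv ((Hmis V k G c).neighborSet vv)) ∩ S).ncard :=
      Set.ncard_le_ncard hsub (Set.toFinite _)
    omega
end

section
/- Let k, φ and G_φ be as in the context. If G_φ has a dominating set S with M(v,S) ≤ k for every vertex v of G_φ, then φ has a satisfying assignment. -/
namespace SATRed

/-- Vertex set of `G_φ`: literal vertices `v_{x_i}, v_{¬x_i}` (a pair
`(i, b)` with `b = true` for the positive literal), the vertices `a_i^j`,
`b_i^j`, the pendants `d_{i,j}^t`, the vertex `Y`, the clause vertices
`v_{C_l}`, the vertices `u_q`, and the pendants `r_q^p`. -/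
abbrev VSat (n m k : ℕ) : Type :=
  (Fin n × Bool) ⊕ ((Fin n × Fin (k + 1)) ⊕ ((Fin n × Fin (k - 1)) ⊕
    ((Fin n × Fin (k - 1) × Fin (k + 1)) ⊕
      (Unit ⊕ (Fin m ⊕ (Fin k ⊕ (Fin k × Fin (k + 1))))))))

/-- Literal vertex: `litV i true = v_{x_i}`, `litV i false = v_{¬x_i}`. -/
def litV (n m k : ℕ) (i : Fin n) (b : Bool) : VSat n m k := Sum.inl (i, b)

/-- The vertex `a_i^j`. -/
def aV (n m k : ℕ) (i : Fin n) (j : Fin (k + 1)) : VSat n m k :=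
  Sum.inr (Sum.inl (i, j))

/-- The vertex `b_i^j`. -/
def bV (n m k : ℕ) (i : Fin n) (j : Fin (k - 1)) : VSat n m k :=
  Sum.inr (Sum.inr (Sum.inl (i, j)))

/-- The pendant vertex `d_{i,j}^t`. -/
def dV (n m k : ℕ) (i : Fin n) (j : Fin (k - 1)) (t : Fin (k + 1)) : VSat n m k :=
  Sum.inr (Sum.inr (Sum.inr (Sum.inl (i, j, t))))

/-- The vertex `Y`. -/
def yV (n m k : ℕ) : VSat n m k :=
  Sum.inr (Sum.inr (Sum.inr (Sum.inr (Sum.inl ()))))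

/-- The clause vertex `v_{C_l}`. -/
def clV (n m k : ℕ) (l : Fin m) : VSat n m k :=
  Sum.inr (Sum.inr (Sum.inr (Sum.inr (Sum.inr (Sum.inl l)))))

/-- The vertex `u_q`. -/
def uV (n m k : ℕ) (q : Fin k) : VSat n m k :=
  Sum.inr (Sum.inr (Sum.inr (Sum.inr (Sum.inr (Sum.inr (Sum.inl q))))))

/-- The pendant vertex `r_q^p`. -/
def rV (n m k : ℕ) (q : Fin k) (p : Fin (k + 1)) : VSat n m k :=
  Sum.inr (Sum.inr (Sum.inr (Sum.inr (Sum.inr (Sum.inr (Sum.inr (q, p)))))))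

/-- Adjacency-generating relation of `G_φ`, where a clause is a finite set of
literals `(i, b)` (`b = true` meaning the positive literal `x_i`). -/
def rSat (n m k : ℕ) (Cl : Fin m → Finset (Fin n × Bool)) :
    VSat n m k → VSat n m k → Prop := fun x y =>
  (∃ (i : Fin n) (b1 b2 : Bool), x = litV n m k i b1 ∧ y = litV n m k i b2) ∨
  (∃ (i : Fin n) (b : Bool) (j : Fin (k + 1)), x = litV n m k i b ∧ y = aV n m k i j) ∨
  (∃ (i : Fin n) (b : Bool) (j : Fin (k - 1)), x = litV n m k i b ∧ y = bV n m k i j) ∨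
  (∃ (i : Fin n) (j : Fin (k - 1)) (t : Fin (k + 1)), x = bV n m k i j ∧ y = dV n m k i j t) ∨
  (∃ l : Fin m, x = yV n m k ∧ y = clV n m k l) ∨
  (∃ q : Fin k, x = yV n m k ∧ y = uV n m k q) ∨
  (∃ (q : Fin k) (p : Fin (k + 1)), x = uV n m k q ∧ y = rV n m k q p) ∨
  (∃ (l : Fin m) (i : Fin n) (b : Bool),
    x = clV n m k l ∧ y = litV n m k i b ∧ (i, b) ∈ Cl l)

/-- The graph `G_φ` of the reduction. -/
def Gphi (n m k : ℕ) (Cl : Fin m → Finset (Fin n × Bool)) :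
    SimpleGraph (VSat n m k) := SimpleGraph.fromRel (rSat n m k Cl)

/-- `S` is a dominating set. -/
def IsDom {W : Type*} (H : SimpleGraph W) (S : Set W) : Prop :=
  ∀ v, v ∈ S ∨ ∃ u ∈ S, H.Adj v u

/-- Every vertex has membership `M(v,S) = |N[v] ∩ S|` at most `b`. -/
def MembLE {W : Type*} (H : SimpleGraph W) (S : Set W) (b : ℕ) : Prop :=
  ∀ v, ((insert v (H.neighborSet v)) ∩ S).ncard ≤ b

end SATRed
open SATRed

section Helpers
variable {n m k : ℕ} {Cl : Fin m → Finset (Fin n × Bool)}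

lemma memb_bound {W : Type*} [Finite W] (H : SimpleGraph W) (S : Set W) (b : ℕ)
    (hM : SATRed.MembLE H S b) (v : W) (T : Finset W)
    (hT : ∀ x ∈ T, x ∈ (insert v (H.neighborSet v)) ∩ S) : T.card ≤ b := by
  have h1 : (T : Set W).ncard ≤ ((insert v (H.neighborSet v)) ∩ S).ncard :=
    Set.ncard_le_ncard (fun x hx => hT x hx) (Set.toFinite _)
  rw [Set.ncard_coe_finset] at h1
  exact h1.trans (hM v)

lemma adj_rV_char {q p u} (h : (Gphi n m k Cl).Adj (rV n m k q p) u) : u = uV n m k q := by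
  obtain ⟨hne, h | h⟩ := h
  · simp [rSat, litV, aV, bV, dV, yV, clV, uV, rV] at h
  · simp only [rSat, litV, aV, bV, dV, yV, clV, uV, rV] at h ⊢
    rcases h with ⟨_,_,_,_,h⟩|⟨_,_,_,_,h⟩|⟨_,_,_,_,h⟩|⟨_,_,_,_,h⟩|⟨_,_,h⟩|⟨_,_,h⟩|⟨q',p',h1,h2⟩|⟨_,_,_,_,h,_⟩ <;>
      simp_all

lemma adj_dV_char {i j t u} (h : (Gphi n m k Cl).Adj (dV n m k i j t) u) : u = bV n m k i j := by
  obtain ⟨hne, h | h⟩ := h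
  · simp [rSat, litV, aV, bV, dV, yV, clV, uV, rV] at h
  · simp only [rSat, litV, aV, bV, dV, yV, clV, uV, rV] at h ⊢
    rcases h with ⟨_,_,_,_,h⟩|⟨_,_,_,_,h⟩|⟨_,_,_,_,h⟩|⟨i',j',t',h1,h2⟩|⟨_,_,h⟩|⟨_,_,h⟩|⟨_,_,_,h⟩|⟨_,_,_,_,h,_⟩ <;>
      simp_all

lemma adj_clV_char {l u} (h : (Gphi n m k Cl).Adj (clV n m k l) u) :
    u = yV n m k ∨ ∃ i b, u = litV n m k i b ∧ (i, b) ∈ Cl l := by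
  obtain ⟨hne, h | h⟩ := h
  · rcases h with ⟨_,_,_,hx,_⟩|⟨_,_,_,hx,_⟩|⟨_,_,_,hx,_⟩|⟨_,_,_,hx,_⟩|⟨_,hx,_⟩|⟨_,hx,_⟩|⟨_,_,hx,_⟩|⟨l',i,b,hx,hy,h3⟩
    · simp [clV, litV] at hx
    · simp [clV, litV] at hx
    · simp [clV, litV] at hx
    · simp [clV, bV] at hx
    · simp [clV, yV] at hx
    · simp [clV, yV] at hx
    · simp [clV, uV] at hx
    · have hl : l = l' := by simpa [clV] using hx
      exact Or.inr ⟨i, b, hy, hl ▸ h3⟩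
  · rcases h with ⟨_,_,_,_,hy⟩|⟨_,_,_,_,hy⟩|⟨_,_,_,_,hy⟩|⟨_,_,_,_,hy⟩|⟨l',hx,hy⟩|⟨_,_,hy⟩|⟨_,_,_,hy⟩|⟨_,_,_,_,hy,_⟩
    · simp [clV, litV] at hy
    · simp [clV, aV] at hy
    · simp [clV, bV] at hy
    · simp [clV, dV] at hy
    · exact Or.inl hx
    · simp [clV, uV] at hy
    · simp [clV, rV] at hy
    · simp [clV, litV] at hy

lemma adj_uV_rV {q p} : (Gphi n m k Cl).Adj (uV n m k q) (rV n m k q p) := by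
  rw [Gphi, SimpleGraph.fromRel_adj]
  exact ⟨by simp [uV, rV], Or.inl (Or.inr (Or.inr (Or.inr (Or.inr (Or.inr (Or.inr
    (Or.inl ⟨q, p, rfl, rfl⟩)))))))⟩

lemma adj_bV_dV {i j t} : (Gphi n m k Cl).Adj (bV n m k i j) (dV n m k i j t) := by
  rw [Gphi, SimpleGraph.fromRel_adj]
  exact ⟨by simp [bV, dV], Or.inl (Or.inr (Or.inr (Or.inr (Or.inl ⟨i, j, t, rfl, rfl⟩))))⟩

lemma adj_yV_uV {q} : (Gphi n m k Cl).Adj (yV n m k) (uV n m k q) := by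
  rw [Gphi, SimpleGraph.fromRel_adj]
  exact ⟨by simp [yV, uV], Or.inl (Or.inr (Or.inr (Or.inr (Or.inr (Or.inr
    (Or.inl ⟨q, rfl, rfl⟩))))))⟩

lemma adj_yV_clV {l} : (Gphi n m k Cl).Adj (yV n m k) (clV n m k l) := by
  rw [Gphi, SimpleGraph.fromRel_adj]
  exact ⟨by simp [yV, clV], Or.inl (Or.inr (Or.inr (Or.inr (Or.inr
    (Or.inl ⟨l, rfl, rfl⟩)))))⟩

lemma adj_lit_lit {i} : (Gphi n m k Cl).Adj (litV n m k i true) (litV n m k i false) := by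
  rw [Gphi, SimpleGraph.fromRel_adj]
  exact ⟨by simp [litV], Or.inl (Or.inl ⟨i, true, false, rfl, rfl⟩)⟩

lemma adj_lit_bV {i b j} : (Gphi n m k Cl).Adj (litV n m k i b) (bV n m k i j) := by
  rw [Gphi, SimpleGraph.fromRel_adj]
  exact ⟨by simp [litV, bV], Or.inl (Or.inr (Or.inr (Or.inl ⟨i, b, j, rfl, rfl⟩)))⟩

end Helpers

open SATRed in
/-- If `G_φ` has a dominating set `S` with `M(v,S) ≤ k` for every vertex `v`
of `G_φ`, then `φ` has a satisfying assignment. -/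
theorem stmt_10 (n m k : ℕ) (hk : 3 ≤ k) (hm : 1 ≤ m)
    (Cl : Fin m → Finset (Fin n × Bool))
    (hne : ∀ l, (Cl l).Nonempty) (hcard : ∀ l, (Cl l).card ≤ 3)
    (hmds : ∃ S : Set (VSat n m k),
      IsDom (Gphi n m k Cl) S ∧ MembLE (Gphi n m k Cl) S k) :
    ∃ A : Fin n → Bool, ∀ l : Fin m, ∃ p ∈ Cl l, A p.1 = p.2 := by
  classical
  obtain ⟨S, hdom, hmemb⟩ := hmds
  -- Step 1: all u_q ∈ S
  have hu : ∀ q : Fin k, uV n m k q ∈ S := by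
    intro q
    by_contra hq
    have hr : ∀ p : Fin (k + 1), rV n m k q p ∈ S := by
      intro p
      rcases hdom (rV n m k q p) with h | ⟨u, huS, hadj⟩
      · exact h
      · rw [adj_rV_char hadj] at huS; exact absurd huS hq
    have hb := memb_bound _ S k hmemb (uV n m k q) (Finset.univ.image (rV n m k q))
      (by
        intro x hx
        simp only [Finset.mem_image, Finset.mem_univ, true_and] at hx
        obtain ⟨p, rfl⟩ := hx
        exact ⟨Set.mem_insert_of_mem _ adj_uV_rV, hr p⟩)
    rw [Finset.card_image_of_injective _ (fun p p' h => by simpa [rV] using h),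
      Finset.card_univ, Fintype.card_fin] at hb
    omega
  -- Step 2: all b_i^j ∈ S
  have hbS : ∀ (i : Fin n) (j : Fin (k - 1)), bV n m k i j ∈ S := by
    intro i j
    by_contra hbj
    have hd : ∀ t : Fin (k + 1), dV n m k i j t ∈ S := by
      intro t
      rcases hdom (dV n m k i j t) with h | ⟨u, huS, hadj⟩
      · exact h
      · rw [adj_dV_char hadj] at huS; exact absurd huS hbj
    have hb := memb_bound _ S k hmemb (bV n m k i j) (Finset.univ.image (dV n m k i j))
      (by
        intro x hx
        simp only [Finset.mem_image, Finset.mem_univ, true_and] at hx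
        obtain ⟨t, rfl⟩ := hx
        exact ⟨Set.mem_insert_of_mem _ adj_bV_dV, hd t⟩)
    rw [Finset.card_image_of_injective _ (fun t t' h => by simpa [dV] using h),
      Finset.card_univ, Fintype.card_fin] at hb
    omega
  -- Step 3: anything in S within N[Y] is some u_q
  have hYside : ∀ w ∈ S, w ∈ insert (yV n m k) ((Gphi n m k Cl).neighborSet (yV n m k)) →
      ∃ q, w = uV n m k q := by
    intro w hwS hw
    by_contra hno
    push_neg at hno
    have hwmem : w ∉ Finset.univ.image (uV n m k) := by
      simp only [Finset.mem_image, Finset.mem_univ, true_and]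
      rintro ⟨q, rfl⟩; exact hno q rfl
    have hb := memb_bound _ S k hmemb (yV n m k)
      (insert w (Finset.univ.image (uV n m k)))
      (by
        intro x hx
        rcases Finset.mem_insert.mp hx with rfl | hx
        · exact ⟨hw, hwS⟩
        · simp only [Finset.mem_image, Finset.mem_univ, true_and] at hx
          obtain ⟨q, rfl⟩ := hx
          exact ⟨Set.mem_insert_of_mem _ adj_yV_uV, hu q⟩)
    rw [Finset.card_insert_of_notMem hwmem,
      Finset.card_image_of_injective _ (fun q q' h => by simpa [uV] using h),
      Finset.card_univ, Fintype.card_fin] at hb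
    omega
  have hY : yV n m k ∉ S := by
    intro h
    obtain ⟨q, hq⟩ := hYside _ h (Set.mem_insert _ _)
    simp [yV, uV] at hq
  have hCl : ∀ l, clV n m k l ∉ S := by
    intro l h
    obtain ⟨q, hq⟩ := hYside _ h (Set.mem_insert_of_mem _ adj_yV_clV)
    simp [clV, uV] at hq
  -- Step 4: at most one literal vertex per variable in S
  have hone : ∀ i : Fin n, ¬(litV n m k i true ∈ S ∧ litV n m k i false ∈ S) := by
    rintro i ⟨h1, h0⟩
    have hb := memb_bound _ S k hmemb (litV n m k i true)
      (insert (litV n m k i true) (insert (litV n m k i false)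
        (Finset.univ.image (bV n m k i))))
      (by
        intro x hx
        rcases Finset.mem_insert.mp hx with rfl | hx
        · exact ⟨Set.mem_insert _ _, h1⟩
        rcases Finset.mem_insert.mp hx with rfl | hx
        · exact ⟨Set.mem_insert_of_mem _ adj_lit_lit, h0⟩
        · simp only [Finset.mem_image, Finset.mem_univ, true_and] at hx
          obtain ⟨j, rfl⟩ := hx
          exact ⟨Set.mem_insert_of_mem _ adj_lit_bV, hbS i j⟩)
    rw [Finset.card_insert_of_notMem (by
        simp only [Finset.mem_insert, Finset.mem_image, Finset.mem_univ, true_and]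
        push_neg
        exact ⟨by simp [litV], fun j => by simp [litV, bV]⟩),
      Finset.card_insert_of_notMem (by
        simp only [Finset.mem_image, Finset.mem_univ, true_and]
        push_neg
        exact fun j => by simp [litV, bV]),
      Finset.card_image_of_injective _ (fun j j' h => by simpa [bV] using h),
      Finset.card_univ, Fintype.card_fin] at hb
    omega
  -- Conclusion
  refine ⟨fun i => if litV n m k i true ∈ S then true else false, fun l => ?_⟩
  rcases hdom (clV n m k l) with h | ⟨u, huS, hadj⟩
  · exact absurd h (hCl l)
  rcases adj_clV_char hadj with rfl | ⟨i, b, rfl, hmem⟩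
  · exact absurd huS hY
  refine ⟨(i, b), hmem, ?_⟩
  cases b with
  | true => simp [huS]
  | false =>
    have : litV n m k i true ∉ S := fun h => hone i ⟨h, huS⟩
    simp [this]
end

section
/- Let k, φ and G_φ be as in the context. The minimum size of a vertex cover of G_φ is (n+1)(k+1); that is, G_φ has a vertex cover of size (n+1)(k+1), and every vertex cover of G_φ has at least (n+1)(k+1) vertices. -/
namespace SATRed

section Aux
variable (n m k : ℕ)

/-- Index type of size `(n+1)(k+1)`. -/
abbrev Idx (n k : ℕ) : Type := (Fin n × Fin (k + 1)) ⊕ Fin (k + 1)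

/-- First endpoints / cover vertices. -/
def cF (hk : 3 ≤ k) : Idx n k → VSat n m k
  | .inl (i, j) =>
    if _ : j.val = 0 then litV n m k i true
    else if _ : j.val = 1 then litV n m k i false
    else bV n m k i ⟨j.val - 2, by have := j.isLt; omega⟩
  | .inr j =>
    if _ : j.val = 0 then yV n m k
    else uV n m k ⟨j.val - 1, by have := j.isLt; omega⟩

/-- Second endpoints of the matching. -/
def eF (hm : 1 ≤ m) (hk : 3 ≤ k) : Idx n k → VSat n m k
  | .inl (i, j) =>
    if _ : j.val = 0 then aV n m k i ⟨0, by omega⟩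
    else if _ : j.val = 1 then aV n m k i ⟨1, by omega⟩
    else dV n m k i ⟨j.val - 2, by have := j.isLt; omega⟩ ⟨0, by omega⟩
  | .inr j =>
    if _ : j.val = 0 then clV n m k ⟨0, hm⟩
    else rV n m k ⟨j.val - 1, by have := j.isLt; omega⟩ ⟨0, by omega⟩

/-- Index of the `b_i^j / d` edge. -/
def bIdx (i : Fin n) (j : Fin (k - 1)) : Idx n k :=
  .inl (i, ⟨j.val + 2, by have := j.isLt; omega⟩)

/-- Index of the `u_q / r` edge. -/
def uIdx (q : Fin k) : Idx n k :=
  .inr ⟨q.val + 1, by have := q.isLt; omega⟩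

/-- Retraction to indices. -/
def pF (hk : 3 ≤ k) : VSat n m k → Option (Idx n k)
  | .inl (i, b) =>
      some (.inl (i, if b then ⟨0, Nat.succ_pos k⟩ else ⟨1, by omega⟩))
  | .inr (.inl (i, j)) =>
      if j.val = 0 then some (.inl (i, ⟨0, Nat.succ_pos k⟩))
      else if j.val = 1 then some (.inl (i, ⟨1, by omega⟩))
      else none
  | .inr (.inr (.inl (i, j))) => some (bIdx n k i j)
  | .inr (.inr (.inr (.inl (i, j, t)))) =>
      if t.val = 0 then some (bIdx n k i j) else none
  | .inr (.inr (.inr (.inr (.inl _)))) => some (.inr ⟨0, Nat.succ_pos k⟩)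
  | .inr (.inr (.inr (.inr (.inr (.inl l))))) =>
      if l.val = 0 then some (.inr ⟨0, Nat.succ_pos k⟩) else none
  | .inr (.inr (.inr (.inr (.inr (.inr (.inl q)))))) => some (uIdx n k q)
  | .inr (.inr (.inr (.inr (.inr (.inr (.inr (q, p))))))) =>
      if p.val = 0 then some (uIdx n k q) else none

variable (hk : 3 ≤ k) (hm : 1 ≤ m)

lemma pF_cF (x : Idx n k) : pF n m k hk (cF n m k hk x) = some x := by
  rcases x with ⟨i, j⟩ | j
  · by_cases h0 : j.val = 0
    · simp [cF, pF, litV, h0, Fin.ext_iff]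
    · by_cases h1 : j.val = 1
      · simp [cF, pF, litV, h0, h1, Fin.ext_iff]
      · simp only [cF, pF, litV, bV, h0, h1, dif_neg, dite_false]
        simp [bIdx, uIdx, Fin.ext_iff]
        omega
  · by_cases h0 : j.val = 0
    · simp [cF, pF, yV, h0, Fin.ext_iff]
    · simp only [cF, pF, yV, uV, h0, dite_false]
      simp [bIdx, uIdx, Fin.ext_iff]
      omega

lemma pF_eF (x : Idx n k) : pF n m k hk (eF n m k hm hk x) = some x := by
  rcases x with ⟨i, j⟩ | j
  · by_cases h0 : j.val = 0
    · simp [eF, pF, aV, h0, Fin.ext_iff]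
    · by_cases h1 : j.val = 1
      · simp [eF, pF, aV, h0, h1, Fin.ext_iff]
      · simp only [eF, pF, aV, dV, h0, h1, dif_neg, dite_false]
        simp [bIdx, uIdx, Fin.ext_iff]
        omega
  · by_cases h0 : j.val = 0
    · simp [eF, pF, clV, h0, Fin.ext_iff]
    · simp only [eF, pF, clV, rV, h0, dite_false]
      simp [bIdx, uIdx, Fin.ext_iff]
      omega

lemma adj_cF_eF (Cl : Fin m → Finset (Fin n × Bool)) (x : Idx n k) :
    (Gphi n m k Cl).Adj (cF n m k hk x) (eF n m k hm hk x) := by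
  rw [Gphi, SimpleGraph.fromRel_adj]
  constructor
  · rcases x with ⟨i, j⟩ | j <;> simp only [cF, eF] <;> split_ifs <;>
      simp [litV, aV, bV, dV, yV, clV, uV, rV]
  · left
    rcases x with ⟨i, j⟩ | j <;> simp only [cF, eF] <;> split_ifs
    · exact Or.inr (Or.inl ⟨i, true, _, rfl, rfl⟩)
    · exact Or.inr (Or.inl ⟨i, false, _, rfl, rfl⟩)
    · exact Or.inr (Or.inr (Or.inr (Or.inl ⟨i, _, _, rfl, rfl⟩)))
    · exact Or.inr (Or.inr (Or.inr (Or.inr (Or.inl ⟨_, rfl, rfl⟩))))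
    · exact Or.inr (Or.inr (Or.inr (Or.inr (Or.inr (Or.inr (Or.inl ⟨_, _, rfl, rfl⟩))))))

lemma cF_injective : Function.Injective (cF n m k hk) := by
  intro x y h
  have := pF_cF n m k hk x
  rw [h, pF_cF n m k hk y] at this
  exact (Option.some_injective _ this).symm


lemma cF_bIdx (hk : 3 ≤ k) (i : Fin n) (j : Fin (k - 1)) :
    cF n m k hk (bIdx n k i j) = bV n m k i j := by
  have h2 := j.isLt
  simp only [cF, bIdx]
  rw [dif_neg (by omega), dif_neg (by omega)]
  congr 1

lemma cF_uIdx (hk : 3 ≤ k) (q : Fin k) :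
    cF n m k hk (uIdx n k q) = uV n m k q := by
  simp only [cF, uIdx]
  rw [dif_neg (by omega)]
  congr 1

lemma litV_mem (hk : 3 ≤ k) (i : Fin n) (b : Bool) :
    litV n m k i b ∈ Set.range (cF n m k hk) := by
  cases b
  · exact ⟨.inl (i, ⟨1, by omega⟩), by simp [cF]⟩
  · exact ⟨.inl (i, ⟨0, Nat.succ_pos k⟩), by simp [cF]⟩

lemma yV_mem (hk : 3 ≤ k) : yV n m k ∈ Set.range (cF n m k hk) :=
  ⟨.inr ⟨0, Nat.succ_pos k⟩, by simp [cF]⟩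

lemma card_Idx : Fintype.card (Idx n k) = (n + 1) * (k + 1) := by
  simp [Idx]; ring

end Aux

end SATRed

open SATRed in
/-- The minimum size of a vertex cover of `G_φ` is `(n+1)(k+1)`: there is a
vertex cover of size `(n+1)(k+1)`, and every vertex cover has at least
`(n+1)(k+1)` vertices. -/
theorem stmt_11 (n m k : ℕ) (hk : 3 ≤ k) (hm : 1 ≤ m)
    (Cl : Fin m → Finset (Fin n × Bool))
    (hne : ∀ l, (Cl l).Nonempty) (hcard : ∀ l, (Cl l).card ≤ 3) :
    (∃ Cv : Set (VSat n m k),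
      (∀ x y, (Gphi n m k Cl).Adj x y → x ∈ Cv ∨ y ∈ Cv) ∧
      Cv.ncard = (n + 1) * (k + 1)) ∧
    (∀ Cv : Set (VSat n m k),
      (∀ x y, (Gphi n m k Cl).Adj x y → x ∈ Cv ∨ y ∈ Cv) →
      (n + 1) * (k + 1) ≤ Cv.ncard) := by
  classical
  constructor
  · refine ⟨Set.range (cF n m k hk), ?_, ?_⟩
    · intro x y hadj
      rw [Gphi, SimpleGraph.fromRel_adj] at hadj
      have key : ∀ a b : VSat n m k, rSat n m k Cl a b →
          a ∈ Set.range (cF n m k hk) ∨ b ∈ Set.range (cF n m k hk) := by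
        intro a b hr
        rcases hr with ⟨i,b1,b2,ha,hb⟩ | ⟨i,bb,j,ha,hb⟩ | ⟨i,bb,j,ha,hb⟩ |
          ⟨i,j,t,ha,hb⟩ | ⟨l,ha,hb⟩ | ⟨q,ha,hb⟩ | ⟨q,p,ha,hb⟩ | ⟨l,i,bb,ha,hb,_⟩
        · exact Or.inl (ha ▸ litV_mem n m k hk i b1)
        · exact Or.inl (ha ▸ litV_mem n m k hk i bb)
        · exact Or.inl (ha ▸ litV_mem n m k hk i bb)
        · exact Or.inl (ha ▸ ⟨bIdx n k i j, cF_bIdx n m k hk i j⟩)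
        · exact Or.inl (ha ▸ yV_mem n m k hk)
        · exact Or.inl (ha ▸ yV_mem n m k hk)
        · exact Or.inl (ha ▸ ⟨uIdx n k q, cF_uIdx n m k hk q⟩)
        · exact Or.inr (hb ▸ litV_mem n m k hk i bb)
      rcases hadj.2 with h | h
      · exact key x y h
      · exact (key y x h).symm
    · have h1 : Nat.card (Set.range (cF n m k hk)) = Nat.card (Idx n k) :=
        Nat.card_range_of_injective (cF_injective n m k hk)
      rw [← Nat.card_coe_set_eq, h1, Nat.card_eq_fintype_card, card_Idx]
  · intro Cv hCv
    set g : Idx n k → VSat n m k :=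
      fun x => if cF n m k hk x ∈ Cv then cF n m k hk x else eF n m k hm hk x with hgdef
    have hg : ∀ x, g x ∈ Cv := by
      intro x
      rcases hCv _ _ (adj_cF_eF n m k hk hm Cl x) with h | h
      · simp [hgdef, h]
      · by_cases hc : cF n m k hk x ∈ Cv <;> simp [hgdef, hc, h]
    have hpg : ∀ x, pF n m k hk (g x) = some x := by
      intro x
      by_cases hc : cF n m k hk x ∈ Cv <;>
        simp [hgdef, hc, pF_cF, pF_eF]
    have hginj : Function.Injective g := by
      intro x y hxy
      have := hpg x
      rw [hxy, hpg y] at this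
      exact (Option.some_injective _ this).symm
    have hsub : Set.range g ⊆ Cv := Set.range_subset_iff.2 hg
    have h1 : (Set.range g).ncard = (n + 1) * (k + 1) := by
      rw [← Nat.card_coe_set_eq, Nat.card_range_of_injective hginj,
        Nat.card_eq_fintype_card, card_Idx]
    rw [← h1]
    exact Set.ncard_le_ncard hsub (Set.toFinite _)
end

section
/- Let k, n, G and H be as in the context. If there exist indices x_1, …, x_k ∈ [n] such that the vertices u_{1,x_1}, …, u_{k,x_k} are pairwise adjacent in G (a multicolored clique), then H has a dominating set S with M(v,S) ≤ n+1 for every vertex v of H. -/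
/-!
Fix a multicolored clique `x`. In every block take all of `C'`; in the gadget selected by the
clique (`I_{x_i}` in `H_i`, `I_{u_{i,x_i} u_{j,x_j}}` in `H_{i,j}`) take `h₂` and `A`, and in every
other gadget `h₁` and `D`; take no connector. A vertex of a block only sees chosen vertices of its
own gadget (at most `n + 1` of them) or of `C'` (exactly `n + 1`), and the only chosen vertices
`f` sees are the `n` vertices of `A` in the selected gadget. The connector `r^i_{i,j}` sees `a_t` of
`I_{x_i}` for `t ≥ x_i` and `a_t` of the selected edge-gadget for `t ≤ x_i`, so `n + 1` chosen
vertices in total, and likewise for the other three connectors.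
-/

namespace MCCRed

/-- Vertex set of a type-I gadget of order `n`: the heads `h₁, h₂`, the sets
`A = {a_1,…,a_n}` and `D = {d_1,…,d_n}`, and, for each `t ∈ [n]` and each of
the three D-gadgets `D_{a_t,d_t}`, `D_{a_t,h₁}`, `D_{d_t,h₂}` (indexed by
`Fin 3` in this order), its `n+2` private common neighbors. -/
abbrev IVert (n : ℕ) : Type :=
  (Unit ⊕ Unit) ⊕ ((Fin n ⊕ Fin n) ⊕ (Fin n × Fin 3 × Fin (n + 2)))

/-- The head `h₁`. -/
def h1V (n : ℕ) : IVert n := Sum.inl (Sum.inl ())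
/-- The head `h₂`. -/
def h2V (n : ℕ) : IVert n := Sum.inl (Sum.inr ())
/-- The vertex `a_t`. -/
def aIV (n : ℕ) (t : Fin n) : IVert n := Sum.inr (Sum.inl (Sum.inl t))
/-- The vertex `d_t`. -/
def dIV (n : ℕ) (t : Fin n) : IVert n := Sum.inr (Sum.inl (Sum.inr t))
/-- The `s`-th private vertex of the `w`-th D-gadget at position `t`
(`w = 0`: `D_{a_t,d_t}`, `w = 1`: `D_{a_t,h₁}`, `w = 2`: `D_{d_t,h₂}`). -/
def padV (n : ℕ) (t : Fin n) (w : Fin 3) (s : Fin (n + 2)) : IVert n :=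
  Sum.inr (Sum.inr (t, w, s))

/-- Adjacency-generating relation of the type-I gadget:  `h₁h₂`, `h₂` to every
`a_t`, `h₁` to every `d_t`, the heads of each D-gadget are adjacent
(`a_t d_t`, `a_t h₁`, `d_t h₂`), and each of the `n+2` private vertices of a
D-gadget is adjacent exactly to its two heads. -/
def rI (n : ℕ) : IVert n → IVert n → Prop := fun x y =>
  (x = h1V n ∧ y = h2V n) ∨
  (∃ t, x = h2V n ∧ y = aIV n t) ∨
  (∃ t, x = h1V n ∧ y = dIV n t) ∨
  (∃ t, x = aIV n t ∧ y = dIV n t) ∨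
  (∃ t, x = aIV n t ∧ y = h1V n) ∨
  (∃ t, x = dIV n t ∧ y = h2V n) ∨
  (∃ t s, x = padV n t 0 s ∧ (y = aIV n t ∨ y = dIV n t)) ∨
  (∃ t s, x = padV n t 1 s ∧ (y = aIV n t ∨ y = h1V n)) ∨
  (∃ t s, x = padV n t 2 s ∧ (y = dIV n t ∨ y = h2V n))

/-- The type-I gadget of order `n` as a simple graph. -/
def gadgetI (n : ℕ) : SimpleGraph (IVert n) := SimpleGraph.fromRel (rI n)

/-- Vertex set of a block whose type-I gadgets are indexed by `ι`: the gadget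
vertices together with `f`, `f'`, the `c_p` (`p ∈ [n+1]`) and the `b_q`
(`q ∈ [(n+1)(n+2)]`). -/
abbrev BVert (n : ℕ) (ι : Type) : Type :=
  (ι × IVert n) ⊕ ((Unit ⊕ Unit) ⊕ (Fin (n + 1) ⊕ Fin ((n + 1) * (n + 2))))

/-- The copy of gadget vertex `x` inside the gadget indexed by `g`. -/
def gadV {n : ℕ} {ι : Type} (g : ι) (x : IVert n) : BVert n ι := Sum.inl (g, x)
/-- The block vertex `f`. -/
def fV (n : ℕ) (ι : Type) : BVert n ι := Sum.inr (Sum.inl (Sum.inl ()))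
/-- The block vertex `f'`. -/
def f'V (n : ℕ) (ι : Type) : BVert n ι := Sum.inr (Sum.inl (Sum.inr ()))
/-- The block vertex `c_p`; `C'(B) = {c_1,…,c_{n+1}}`. -/
def cV (n : ℕ) (ι : Type) (p : Fin (n + 1)) : BVert n ι := Sum.inr (Sum.inr (Sum.inl p))
/-- The block vertex `b_q`. -/
def bV (n : ℕ) (ι : Type) (q : Fin ((n + 1) * (n + 2))) : BVert n ι :=
  Sum.inr (Sum.inr (Sum.inr q))

/-- Adjacency-generating relation of a block: the gadget edges inside each
gadget, `f` adjacent to every `a_t` of every gadget, `f f'`, `f'` to each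
`c_p`, and `c_p b_q` exactly when `(p-1)(n+2) < q ≤ p(n+2)` (zero-indexed:
`p(n+2) ≤ q < (p+1)(n+2)`). -/
def rB (n : ℕ) (ι : Type) : BVert n ι → BVert n ι → Prop := fun x y =>
  (∃ (g : ι) (a b : IVert n), x = gadV g a ∧ y = gadV g b ∧ rI n a b) ∨
  (∃ (g : ι) (t : Fin n), x = fV n ι ∧ y = gadV g (aIV n t)) ∨
  (x = fV n ι ∧ y = f'V n ι) ∨
  (∃ p, x = f'V n ι ∧ y = cV n ι p) ∨
  (∃ p q, x = cV n ι p ∧ y = bV n ι q ∧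
    p.val * (n + 2) ≤ q.val ∧ q.val < (p.val + 1) * (n + 2))

/-- Ordered pairs of colors `i < j`, indexing the edge-blocks and connectors. -/
abbrev Pairs (k : ℕ) : Type := {p : Fin k × Fin k // p.1 < p.2}

/-- The edges of `G` between color classes `P.1` and `P.2` (the vertex set of
`G` being `Fin k × Fin n`, with `u_{i,ℓ} = (i,ℓ)`): `e = (x,y)` encodes the
edge `u_{i,x} u_{j,y}`. -/
abbrev EdgeIn {k n : ℕ} (G : SimpleGraph (Fin k × Fin n)) (P : Pairs k) : Type :=
  {e : Fin n × Fin n // G.Adj (P.1.1, e.1) (P.1.2, e.2)}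

/-- Vertex set of `H`: the vertex-blocks `H_i` (with one gadget per `ℓ ∈ [n]`),
the edge-blocks `H_{i,j}` (with one gadget per edge in `E_{i,j}`), and for each
pair `i < j` the four connectors, encoded as `(side, kind)` with
`side = false/true` for superscript `i`/`j` and `kind = false/true` for
`r`/`s`. -/
abbrev VHmcc (k n : ℕ) (G : SimpleGraph (Fin k × Fin n)) : Type :=
  (Fin k × BVert n (Fin n)) ⊕
    ((Σ P : Pairs k, BVert n (EdgeIn G P)) ⊕ (Pairs k × Bool × Bool))

variable {k n : ℕ}

/-- Vertex `x` of the vertex-block `H_i`. -/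
def vbV (G : SimpleGraph (Fin k × Fin n)) (i : Fin k) (x : BVert n (Fin n)) :
    VHmcc k n G := Sum.inl (i, x)

/-- Vertex `x` of the edge-block `H_P`. -/
def ebV (G : SimpleGraph (Fin k × Fin n)) (P : Pairs k)
    (x : BVert n (EdgeIn G P)) : VHmcc k n G := Sum.inr (Sum.inl ⟨P, x⟩)

/-- The connector vertex of the pair `P` on side `side` of kind `kind`
(`kind = false` is `r`, `kind = true` is `s`). -/
def connV (G : SimpleGraph (Fin k × Fin n)) (P : Pairs k) (side kind : Bool) :
    VHmcc k n G := Sum.inr (Sum.inr (P, side, kind))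

/-- Adjacency-generating relation of `H`: block edges inside every vertex-block
and every edge-block, plus the connector edges. For a pair `P = (i,j)` with
`i < j`: in gadget `I_ℓ` of `H_i` the vertex `a_t` is adjacent to `s^i_P` iff
`t ≤ ℓ` and to `r^i_P` iff `ℓ ≤ t` (similarly for `H_j`); in gadget `I_e` of
`H_P` with `e = u_{i,x}u_{j,y}`, the vertex `a_t` is adjacent to `r^i_P` iff
`t ≤ x`, to `s^i_P` iff `x ≤ t`, to `r^j_P` iff `t ≤ y` and to `s^j_P` iff
`y ≤ t`. -/
def rH (k n : ℕ) (G : SimpleGraph (Fin k × Fin n)) :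
    VHmcc k n G → VHmcc k n G → Prop := fun x y =>
  (∃ (i : Fin k) (a b : BVert n (Fin n)),
    x = vbV G i a ∧ y = vbV G i b ∧ rB n (Fin n) a b) ∨
  (∃ (P : Pairs k) (a b : BVert n (EdgeIn G P)),
    x = ebV G P a ∧ y = ebV G P b ∧ rB n (EdgeIn G P) a b) ∨
  (∃ (P : Pairs k) (ℓ t : Fin n), x = vbV G P.1.1 (gadV ℓ (aIV n t)) ∧
    ((t.val ≤ ℓ.val ∧ y = connV G P false true) ∨
     (ℓ.val ≤ t.val ∧ y = connV G P false false))) ∨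
  (∃ (P : Pairs k) (ℓ t : Fin n), x = vbV G P.1.2 (gadV ℓ (aIV n t)) ∧
    ((t.val ≤ ℓ.val ∧ y = connV G P true true) ∨
     (ℓ.val ≤ t.val ∧ y = connV G P true false))) ∨
  (∃ (P : Pairs k) (e : EdgeIn G P) (t : Fin n),
    x = ebV G P (gadV e (aIV n t)) ∧
    (((t.val ≤ e.1.1.val ∧ y = connV G P false false) ∨
      (e.1.1.val ≤ t.val ∧ y = connV G P false true)) ∨
     ((t.val ≤ e.1.2.val ∧ y = connV G P true false) ∨
      (e.1.2.val ≤ t.val ∧ y = connV G P true true))))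

/-- The graph `H` output by the reduction from Multi-Colored Clique. -/
def Hmcc (k n : ℕ) (G : SimpleGraph (Fin k × Fin n)) :
    SimpleGraph (VHmcc k n G) := SimpleGraph.fromRel (rH k n G)

/-- `S` is a dominating set. -/
def IsDom {W : Type*} (H : SimpleGraph W) (S : Set W) : Prop :=
  ∀ v, v ∈ S ∨ ∃ u ∈ S, H.Adj v u

/-- Every vertex has membership `M(v,S) = |N[v] ∩ S|` at most `b`. -/
def MembLE {W : Type*} (H : SimpleGraph W) (S : Set W) (b : ℕ) : Prop :=
  ∀ v, ((insert v (H.neighborSet v)) ∩ S).ncard ≤ b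

/-- A path decomposition of `H` with bags `X_1, …, X_m`: every vertex is in
some bag, every edge is inside some bag, and the bags containing a given
vertex are consecutive. -/
def IsPathDecomp {W : Type*} (H : SimpleGraph W) (m : ℕ) (bags : Fin m → Set W) : Prop :=
  (∀ v, ∃ i, v ∈ bags i) ∧
  (∀ u v, H.Adj u v → ∃ i, u ∈ bags i ∧ v ∈ bags i) ∧
  (∀ (v : W) (i j l : Fin m), i ≤ j → j ≤ l → v ∈ bags i → v ∈ bags l → v ∈ bags j)

end MCCRed

namespace MCCRed

section Membership

variable {W : Type*} {H : SimpleGraph W} {S : Set W} {b : ℕ}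

theorem membLE_of_forall_subset
    (h : ∀ v, ∃ C : Set W, C.Finite ∧ C.ncard ≤ b ∧ insert v (H.neighborSet v) ∩ S ⊆ C) :
    MembLE H S b := fun v => by
  obtain ⟨C, hC, hCb, hsub⟩ := h v
  exact (Set.ncard_le_ncard hsub hC).trans hCb

theorem ncard_closedNbhd_inter_le_of_subset_image {V : Type*} [Finite V]
    {B : SimpleGraph V} {T : Set V} (hT : MembLE B T b) (φ : V → W) (z : V)
    (h : ∀ u ∈ S, u = φ z ∨ H.Adj (φ z) u → ∃ z' ∈ T, (z' = z ∨ B.Adj z z') ∧ φ z' = u) :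
    (insert (φ z) (H.neighborSet (φ z)) ∩ S).ncard ≤ b := by
  refine (Set.ncard_le_ncard ?_ ((Set.toFinite _).image φ)).trans
    ((Set.ncard_image_le (Set.toFinite _)).trans (hT z))
  rintro u ⟨hu, huS⟩
  obtain ⟨z', hz'T, hz', rfl⟩ := h u huS hu
  exact ⟨z', ⟨hz', hz'T⟩, rfl⟩

end Membership

theorem ncard_insert_range_le {α : Type*} {m : ℕ} (a : α) (f : Fin m → α) :
    (insert a (Set.range f)).ncard ≤ m + 1 := by
  refine (Set.ncard_insert_le _ _).trans (Nat.add_le_add_right ?_ 1)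
  rw [← Set.image_univ]
  exact (Set.ncard_image_le (Set.toFinite _)).trans_eq (by simp)

section Gadget

variable {n : ℕ}

def aSide (n : ℕ) : Set (IVert n) := insert (h2V n) (Set.range (aIV n))

def dSide (n : ℕ) : Set (IVert n) := insert (h1V n) (Set.range (dIV n))

theorem ncard_aSide_le : (aSide n).ncard ≤ n + 1 :=
  ncard_insert_range_le _ _

theorem ncard_dSide_le : (dSide n).ncard ≤ n + 1 :=
  ncard_insert_range_le _ _

theorem gadgetI_adj {x y : IVert n} : (gadgetI n).Adj x y ↔ x ≠ y ∧ (rI n x y ∨ rI n y x) :=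
  SimpleGraph.fromRel_adj _ _ _

theorem isDom_aSide : IsDom (gadgetI n) (aSide n) := by
  have h2 : h2V n ∈ aSide n := Set.mem_insert _ _
  have a : ∀ t, aIV n t ∈ aSide n := fun t => Set.mem_insert_of_mem _ ⟨t, rfl⟩
  rintro ((⟨⟨⟩⟩ | ⟨⟨⟩⟩) | (t | t) | ⟨t, w, s⟩)
  · exact Or.inr ⟨_, h2, by simp [gadgetI_adj, rI, h1V, h2V]⟩
  · exact Or.inl h2
  · exact Or.inl (a t)
  · exact Or.inr ⟨_, a t, by simp [gadgetI_adj, rI, aIV, dIV]⟩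
  · right
    fin_cases w
    · exact ⟨_, a t, by simp [gadgetI_adj, rI, aIV, padV]⟩
    · exact ⟨_, a t, by simp [gadgetI_adj, rI, aIV, padV]⟩
    · exact ⟨_, h2, by simp [gadgetI_adj, rI, h2V, padV]⟩

theorem isDom_dSide : IsDom (gadgetI n) (dSide n) := by
  have h1 : h1V n ∈ dSide n := Set.mem_insert _ _
  have d : ∀ t, dIV n t ∈ dSide n := fun t => Set.mem_insert_of_mem _ ⟨t, rfl⟩
  rintro ((⟨⟨⟩⟩ | ⟨⟨⟩⟩) | (t | t) | ⟨t, w, s⟩)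
  · exact Or.inl h1
  · exact Or.inr ⟨_, h1, by simp [gadgetI_adj, rI, h1V, h2V]⟩
  · exact Or.inr ⟨_, d t, by simp [gadgetI_adj, rI, aIV, dIV]⟩
  · exact Or.inl (d t)
  · right
    fin_cases w
    · exact ⟨_, d t, by simp [gadgetI_adj, rI, dIV, padV]⟩
    · exact ⟨_, h1, by simp [gadgetI_adj, rI, h1V, padV]⟩
    · exact ⟨_, d t, by simp [gadgetI_adj, rI, dIV, padV]⟩

end Gadget

section Block

variable {n : ℕ} {ι : Type}

def blockGraph (n : ℕ) (ι : Type) : SimpleGraph (BVert n ι) := SimpleGraph.fromRel (rB n ι)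

theorem blockGraph_adj {x y : BVert n ι} :
    (blockGraph n ι).Adj x y ↔ x ≠ y ∧ (rB n ι x y ∨ rB n ι y x) :=
  SimpleGraph.fromRel_adj _ _ _

theorem rB_gadV_gadV {g g' : ι} {x y : IVert n} :
    rB n ι (gadV g x) (gadV g' y) ↔ g = g' ∧ rI n x y := by
  constructor
  · rintro (⟨g₁, a, b, h₁, h₂, hr⟩ | ⟨_, _, h, -⟩ | ⟨h, -⟩ | ⟨_, h, -⟩ | ⟨_, _, h, -⟩)
    · simp only [gadV, Sum.inl.injEq, Prod.mk.injEq] at h₁ h₂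
      obtain ⟨rfl, rfl⟩ := h₁
      obtain ⟨rfl, rfl⟩ := h₂
      exact ⟨rfl, hr⟩
    all_goals simp [gadV, fV, f'V, cV] at h
  · rintro ⟨rfl, hr⟩
    exact Or.inl ⟨g, x, y, rfl, rfl, hr⟩

theorem blockGraph_adj_gadV {g g' : ι} {x y : IVert n} :
    (blockGraph n ι).Adj (gadV g x) (gadV g' y) ↔ g = g' ∧ (gadgetI n).Adj x y := by
  rw [blockGraph_adj, rB_gadV_gadV, rB_gadV_gadV, gadgetI_adj, Ne, gadV, gadV, Sum.inl.injEq,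
    Prod.mk.injEq]
  grind

variable [DecidableEq ι]

def gadgetDom (g₀ g : ι) : Set (IVert n) := if g = g₀ then aSide n else dSide n

theorem isDom_gadgetDom (g₀ g : ι) : IsDom (gadgetI n) (gadgetDom g₀ g) := by
  unfold gadgetDom
  split_ifs
  exacts [isDom_aSide, isDom_dSide]

theorem ncard_gadgetDom_le (g₀ g : ι) : (gadgetDom (n := n) g₀ g).ncard ≤ n + 1 := by
  unfold gadgetDom
  split_ifs
  exacts [ncard_aSide_le, ncard_dSide_le]

theorem aIV_mem_gadgetDom {g₀ g : ι} {t : Fin n} : aIV n t ∈ gadgetDom g₀ g ↔ g = g₀ := by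
  unfold gadgetDom
  split_ifs with h
  · exact iff_of_true (Set.mem_insert_of_mem _ ⟨t, rfl⟩) h
  · simp [h, dSide, aIV, dIV, h1V]

def blockDom (g₀ : ι) : Set (BVert n ι) := fun z => match z with
  | Sum.inl (g, x) => x ∈ gadgetDom g₀ g
  | Sum.inr (Sum.inr (Sum.inl _)) => True
  | _ => False

theorem cV_mem_blockDom (g₀ : ι) (p : Fin (n + 1)) : cV n ι p ∈ blockDom g₀ := trivial

theorem mem_blockDom_cases {g₀ : ι} {u : BVert n ι} (hu : u ∈ blockDom g₀) :
    (∃ g x, u = gadV g x ∧ x ∈ gadgetDom g₀ g) ∨ ∃ p, u = cV n ι p := by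
  rcases u with ⟨g, x⟩ | (⟨⟨⟩⟩ | ⟨⟨⟩⟩) | (p | q)
  exacts [Or.inl ⟨g, x, rfl, hu⟩, hu.elim, hu.elim, Or.inr ⟨p, rfl⟩, hu.elim]

theorem isDom_blockDom (hn : 1 ≤ n) (g₀ : ι) : IsDom (blockGraph n ι) (blockDom g₀) := by
  rintro (⟨g, x⟩ | (⟨⟨⟩⟩ | ⟨⟨⟩⟩) | (p | q))
  · exact (isDom_gadgetDom g₀ g x).imp id
      fun ⟨y, hy, hxy⟩ => ⟨gadV g y, hy, blockGraph_adj_gadV.2 ⟨rfl, hxy⟩⟩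
  · exact Or.inr ⟨gadV g₀ (aIV n ⟨0, hn⟩), aIV_mem_gadgetDom.2 rfl,
      by simp [blockGraph_adj, rB, gadV, fV]⟩
  · exact Or.inr ⟨cV n ι 0, cV_mem_blockDom g₀ 0, by simp [blockGraph_adj, rB, cV, f'V]⟩
  · exact Or.inl (cV_mem_blockDom g₀ p)
  · have hq := Nat.lt_div_mul_add (a := q) (b := n + 2) (by omega)
    refine Or.inr ⟨cV n ι ⟨q / (n + 2), (Nat.div_lt_iff_lt_mul (by omega)).2 q.2⟩,
      cV_mem_blockDom g₀ _, ?_⟩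
    simpa [blockGraph_adj, rB, gadV, fV, f'V, cV, bV, add_mul, Nat.div_mul_le_self] using hq

theorem closedNbhd_gadV_inter_blockDom_subset (g₀ g : ι) (x : IVert n) :
    insert (gadV g x) ((blockGraph n ι).neighborSet (gadV g x)) ∩ blockDom g₀ ⊆
      gadV g '' gadgetDom g₀ g := by
  rintro u ⟨hu, huS⟩
  rcases mem_blockDom_cases huS with ⟨g', y, rfl, hy⟩ | ⟨p, rfl⟩
  · obtain rfl : g' = g := by
      rcases hu with h | h
      · exact (Prod.mk.inj (Sum.inl_injective h)).1
      · exact (blockGraph_adj_gadV.1 h).1.symm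
    exact ⟨y, hy, rfl⟩
  · simp [blockGraph_adj, rB, gadV, fV, f'V, cV, bV] at hu

theorem closedNbhd_fV_inter_blockDom_subset (g₀ : ι) :
    insert (fV n ι) ((blockGraph n ι).neighborSet (fV n ι)) ∩ blockDom g₀ ⊆
      gadV g₀ '' aSide n := by
  rintro u ⟨hu, huS⟩
  rcases mem_blockDom_cases huS with ⟨g, y, rfl, hy⟩ | ⟨p, rfl⟩
  · obtain ⟨t, rfl⟩ : ∃ t, y = aIV n t := by
      simpa [blockGraph_adj, rB, gadV, fV, f'V, cV, bV] using hu
    obtain rfl := aIV_mem_gadgetDom.1 hy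
    exact ⟨aIV n t, Set.mem_insert_of_mem _ ⟨t, rfl⟩, rfl⟩
  · simp [blockGraph_adj, rB, gadV, fV, f'V, cV, bV] at hu

theorem membLE_blockDom (g₀ : ι) : MembLE (blockGraph n ι) (blockDom g₀) (n + 1) := by
  have hc : (Set.range (cV n ι)).ncard ≤ n + 1 :=
    (Set.ncard_range_of_injective fun _ _ h => by simpa [cV] using h).trans_le (by simp)
  refine membLE_of_forall_subset fun v => ?_
  rcases v with ⟨g, x⟩ | (⟨⟨⟩⟩ | ⟨⟨⟩⟩) | (p | q)
  · exact ⟨_, Set.toFinite _, (Set.ncard_image_le (Set.toFinite _)).trans (ncard_gadgetDom_le g₀ g),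
      closedNbhd_gadV_inter_blockDom_subset g₀ g x⟩
  · exact ⟨_, Set.toFinite _, (Set.ncard_image_le (Set.toFinite _)).trans ncard_aSide_le,
      closedNbhd_fV_inter_blockDom_subset g₀⟩
  all_goals
    refine ⟨Set.range (cV n ι), Set.toFinite _, hc, ?_⟩
    rintro u ⟨hu, huS⟩
    rcases mem_blockDom_cases huS with ⟨g, y, rfl, -⟩ | ⟨p, rfl⟩
    · simp [blockGraph_adj, rB, gadV, fV, f'V, cV, bV] at hu
    · exact ⟨p, rfl⟩

end Block

def pick {α : Type*} (s : Bool) (p : α × α) : α := cond s p.2 p.1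

section Reduction

variable {k n : ℕ} {G : SimpleGraph (Fin k × Fin n)}

theorem hmcc_adj {u v : VHmcc k n G} :
    (Hmcc k n G).Adj u v ↔ u ≠ v ∧ (rH k n G u v ∨ rH k n G v u) :=
  SimpleGraph.fromRel_adj _ _ _

theorem rH_vbV_left {i : Fin k} {z : BVert n (Fin n)} {u : VHmcc k n G}
    (h : rH k n G (vbV G i z) u) :
    (∃ z', u = vbV G i z' ∧ rB n (Fin n) z z') ∨ ∃ P s κ, u = connV G P s κ := by
  rcases h with ⟨i', a, b, h₁, rfl, hr⟩ | ⟨_, _, _, h, -⟩ | ⟨P, _, _, -, ⟨-, rfl⟩ | ⟨-, rfl⟩⟩ |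
    ⟨P, _, _, -, ⟨-, rfl⟩ | ⟨-, rfl⟩⟩ | ⟨_, _, _, h, -⟩
  · obtain ⟨rfl, rfl⟩ := Prod.mk.inj (Sum.inl_injective h₁)
    exact Or.inl ⟨b, rfl, hr⟩
  all_goals first | exact Or.inr ⟨P, _, _, rfl⟩ | simp [vbV, ebV] at h

theorem rH_vbV_right {i : Fin k} {z : BVert n (Fin n)} {u : VHmcc k n G}
    (h : rH k n G u (vbV G i z)) : ∃ z', u = vbV G i z' ∧ rB n (Fin n) z' z := by
  rcases h with ⟨i', a, b, rfl, h₂, hr⟩ | ⟨_, _, _, -, h, -⟩ | ⟨_, _, _, -, ⟨-, h⟩ | ⟨-, h⟩⟩ |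
    ⟨_, _, _, -, ⟨-, h⟩ | ⟨-, h⟩⟩ | ⟨_, _, _, -, (⟨-, h⟩ | ⟨-, h⟩) | (⟨-, h⟩ | ⟨-, h⟩)⟩
  · obtain ⟨rfl, rfl⟩ := Prod.mk.inj (Sum.inl_injective h₂)
    exact ⟨a, rfl, hr⟩
  all_goals simp [vbV, ebV, connV] at h

theorem rH_ebV_left {P : Pairs k} {z : BVert n (EdgeIn G P)} {u : VHmcc k n G}
    (h : rH k n G (ebV G P z) u) :
    (∃ z', u = ebV G P z' ∧ rB n (EdgeIn G P) z z') ∨ ∃ P s κ, u = connV G P s κ := by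
  rcases h with ⟨_, _, _, h, -⟩ | ⟨P', a, b, h₁, rfl, hr⟩ | ⟨_, _, _, h, -⟩ | ⟨_, _, _, h, -⟩ |
    ⟨P', _, _, -, (⟨-, rfl⟩ | ⟨-, rfl⟩) | (⟨-, rfl⟩ | ⟨-, rfl⟩)⟩
  · simp [vbV, ebV] at h
  · obtain ⟨rfl, h⟩ := Sigma.mk.inj_iff.1 (Sum.inl_injective (Sum.inr_injective h₁))
    obtain rfl := eq_of_heq h
    exact Or.inl ⟨b, rfl, hr⟩
  all_goals first | exact Or.inr ⟨P', _, _, rfl⟩ | simp [vbV, ebV] at h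

theorem rH_ebV_right {P : Pairs k} {z : BVert n (EdgeIn G P)} {u : VHmcc k n G}
    (h : rH k n G u (ebV G P z)) : ∃ z', u = ebV G P z' ∧ rB n (EdgeIn G P) z' z := by
  rcases h with ⟨_, _, _, -, h, -⟩ | ⟨P', a, b, rfl, h₂, hr⟩ | ⟨_, _, _, -, ⟨-, h⟩ | ⟨-, h⟩⟩ |
    ⟨_, _, _, -, ⟨-, h⟩ | ⟨-, h⟩⟩ | ⟨_, _, _, -, (⟨-, h⟩ | ⟨-, h⟩) | (⟨-, h⟩ | ⟨-, h⟩)⟩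
  · simp [vbV, ebV] at h
  · obtain ⟨rfl, h⟩ := Sigma.mk.inj_iff.1 (Sum.inl_injective (Sum.inr_injective h₂))
    obtain rfl := eq_of_heq h
    exact ⟨a, rfl, hr⟩
  all_goals simp [ebV, connV] at h

theorem adj_vbV_cases {i : Fin k} {z : BVert n (Fin n)} {u : VHmcc k n G}
    (h : (Hmcc k n G).Adj (vbV G i z) u) :
    (∃ z', u = vbV G i z' ∧ (blockGraph n (Fin n)).Adj z z') ∨ ∃ P s κ, u = connV G P s κ := by
  obtain ⟨hne, h | h⟩ := hmcc_adj.1 h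
  · refine (rH_vbV_left h).imp_left fun ⟨z', hu, hr⟩ => ⟨z', hu, blockGraph_adj.2 ⟨?_, Or.inl hr⟩⟩
    rintro rfl
    exact hne hu.symm
  · obtain ⟨z', rfl, hr⟩ := rH_vbV_right h
    exact Or.inl ⟨z', rfl, blockGraph_adj.2 ⟨fun h' => hne (h' ▸ rfl), Or.inr hr⟩⟩

theorem adj_ebV_cases {P : Pairs k} {z : BVert n (EdgeIn G P)} {u : VHmcc k n G}
    (h : (Hmcc k n G).Adj (ebV G P z) u) :
    (∃ z', u = ebV G P z' ∧ (blockGraph n (EdgeIn G P)).Adj z z') ∨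
      ∃ P s κ, u = connV G P s κ := by
  obtain ⟨hne, h | h⟩ := hmcc_adj.1 h
  · refine (rH_ebV_left h).imp_left fun ⟨z', hu, hr⟩ => ⟨z', hu, blockGraph_adj.2 ⟨?_, Or.inl hr⟩⟩
    rintro rfl
    exact hne hu.symm
  · obtain ⟨z', rfl, hr⟩ := rH_ebV_right h
    exact Or.inl ⟨z', rfl, blockGraph_adj.2 ⟨fun h' => hne (h' ▸ rfl), Or.inr hr⟩⟩

theorem vbV_adj_vbV {i : Fin k} {z z' : BVert n (Fin n)} (h : (blockGraph n (Fin n)).Adj z z') :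
    (Hmcc k n G).Adj (vbV G i z) (vbV G i z') := by
  obtain ⟨hne, hr⟩ := blockGraph_adj.1 h
  refine hmcc_adj.2 ⟨fun h' => hne (Prod.mk.inj (Sum.inl_injective h')).2, ?_⟩
  exact hr.imp (fun r => Or.inl ⟨i, _, _, rfl, rfl, r⟩) fun r => Or.inl ⟨i, _, _, rfl, rfl, r⟩

theorem ebV_adj_ebV {P : Pairs k} {z z' : BVert n (EdgeIn G P)}
    (h : (blockGraph n (EdgeIn G P)).Adj z z') : (Hmcc k n G).Adj (ebV G P z) (ebV G P z') := by
  obtain ⟨hne, hr⟩ := blockGraph_adj.1 h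
  refine hmcc_adj.2 ⟨fun h' => hne (by simpa [ebV] using h'), ?_⟩
  exact hr.imp (fun r => Or.inr (Or.inl ⟨P, _, _, rfl, rfl, r⟩))
    fun r => Or.inr (Or.inl ⟨P, _, _, rfl, rfl, r⟩)

/-- `a_t` of the vertex-gadget `I_ℓ` sees the connector of kind `κ` iff `t ∈ window κ ℓ`, and
`a_t` of an edge-gadget sees it iff `t ∈ window (!κ) y` for the relevant endpoint `y`; two
complementary windows at the same `ℓ` overlap exactly in `ℓ`. -/
def window (κ : Bool) (ℓ : Fin n) : Set (Fin n) := cond κ (Set.Iic ℓ) (Set.Ici ℓ)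

theorem rH_connV_right {P : Pairs k} {s κ : Bool} {u : VHmcc k n G}
    (h : rH k n G u (connV G P s κ)) :
    (∃ ℓ t, u = vbV G (pick s P.1) (gadV ℓ (aIV n t)) ∧ t ∈ window κ ℓ) ∨
      ∃ e t, u = ebV G P (gadV e (aIV n t)) ∧ t ∈ window (!κ) (pick s e.1) := by
  rcases h with ⟨_, _, _, -, h, -⟩ | ⟨_, _, _, -, h, -⟩ |
    ⟨P', ℓ, t, rfl, ⟨ht, h⟩ | ⟨ht, h⟩⟩ | ⟨P', ℓ, t, rfl, ⟨ht, h⟩ | ⟨ht, h⟩⟩ |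
    ⟨P', e, t, rfl, (⟨ht, h⟩ | ⟨ht, h⟩) | (⟨ht, h⟩ | ⟨ht, h⟩)⟩
  all_goals simp only [connV, vbV, ebV, Sum.inr.injEq, reduceCtorEq, Prod.mk.injEq] at h
  all_goals obtain ⟨rfl, rfl, rfl⟩ := h
  exacts [Or.inl ⟨ℓ, t, rfl, ht⟩, Or.inl ⟨ℓ, t, rfl, ht⟩, Or.inl ⟨ℓ, t, rfl, ht⟩,
    Or.inl ⟨ℓ, t, rfl, ht⟩, Or.inr ⟨e, t, rfl, ht⟩, Or.inr ⟨e, t, rfl, ht⟩,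
    Or.inr ⟨e, t, rfl, ht⟩, Or.inr ⟨e, t, rfl, ht⟩]

theorem not_rH_connV_left {P : Pairs k} {s κ : Bool} {u : VHmcc k n G} :
    ¬ rH k n G (connV G P s κ) u := by
  rintro (⟨_, _, _, h, -⟩ | ⟨_, _, _, h, -⟩ | ⟨_, _, _, h, -⟩ | ⟨_, _, _, h, -⟩ |
    ⟨_, _, _, h, -⟩) <;> simp [connV, vbV, ebV] at h

theorem adj_connV_cases {P : Pairs k} {s κ : Bool} {u : VHmcc k n G}
    (h : (Hmcc k n G).Adj u (connV G P s κ)) :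
    (∃ ℓ t, u = vbV G (pick s P.1) (gadV ℓ (aIV n t)) ∧ t ∈ window κ ℓ) ∨
      ∃ e t, u = ebV G P (gadV e (aIV n t)) ∧ t ∈ window (!κ) (pick s e.1) :=
  rH_connV_right ((hmcc_adj.1 h).2.resolve_right not_rH_connV_left)

theorem vbV_adj_connV (P : Pairs k) (s : Bool) {κ : Bool} {ℓ t : Fin n} (ht : t ∈ window κ ℓ) :
    (Hmcc k n G).Adj (vbV G (pick s P.1) (gadV ℓ (aIV n t))) (connV G P s κ) := by
  refine hmcc_adj.2 ⟨by simp [vbV, connV], Or.inl ?_⟩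
  cases s <;> cases κ
  exacts [Or.inr (Or.inr (Or.inl ⟨P, ℓ, t, rfl, Or.inr ⟨ht, rfl⟩⟩)),
    Or.inr (Or.inr (Or.inl ⟨P, ℓ, t, rfl, Or.inl ⟨ht, rfl⟩⟩)),
    Or.inr (Or.inr (Or.inr (Or.inl ⟨P, ℓ, t, rfl, Or.inr ⟨ht, rfl⟩⟩))),
    Or.inr (Or.inr (Or.inr (Or.inl ⟨P, ℓ, t, rfl, Or.inl ⟨ht, rfl⟩⟩)))]

theorem ncard_window_add_ncard_window_not (κ : Bool) (ℓ : Fin n) :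
    (window κ ℓ).ncard + (window (!κ) ℓ).ncard = n + 1 := by
  have hIic : (Set.Iic ℓ).ncard = ℓ + 1 := by
    rw [Set.ncard_eq_toFinset_card', Set.toFinset_Iic, Fin.card_Iic]
  have hIci : (Set.Ici ℓ).ncard = n - ℓ := by
    rw [Set.ncard_eq_toFinset_card', Set.toFinset_Ici, Fin.card_Ici]
  have := ℓ.2
  cases κ <;> simp only [window, cond, Bool.not_false, Bool.not_true, hIic, hIci] <;> omega

def IsMulticoloredClique (G : SimpleGraph (Fin k × Fin n)) (x : Fin k → Fin n) : Prop :=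
  ∀ i j, i ≠ j → G.Adj (i, x i) (j, x j)

variable {x : Fin k → Fin n}

def IsMulticoloredClique.edge (hx : IsMulticoloredClique G x) (P : Pairs k) : EdgeIn G P :=
  ⟨(x P.1.1, x P.1.2), hx _ _ P.2.ne⟩

theorem IsMulticoloredClique.pick_edge (hx : IsMulticoloredClique G x) (P : Pairs k) (s : Bool) :
    pick s (hx.edge P).1 = x (pick s P.1) := by
  cases s <;> rfl

def cliqueDom (hx : IsMulticoloredClique G x) : Set (VHmcc k n G) := fun v => match v with
  | Sum.inl (i, z) => z ∈ blockDom (x i)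
  | Sum.inr (Sum.inl ⟨P, z⟩) => z ∈ blockDom (hx.edge P)
  | Sum.inr (Sum.inr _) => False

theorem isDom_cliqueDom (hn : 1 ≤ n) (hx : IsMulticoloredClique G x) :
    IsDom (Hmcc k n G) (cliqueDom hx) := by
  rintro (⟨i, z⟩ | ⟨P, z⟩ | ⟨P, s, κ⟩)
  · exact (isDom_blockDom hn (x i) z).imp id fun ⟨z', hz', h⟩ => ⟨vbV G i z', hz', vbV_adj_vbV h⟩
  · exact (isDom_blockDom hn (hx.edge P) z).imp id
      fun ⟨z', hz', h⟩ => ⟨ebV G P z', hz', ebV_adj_ebV h⟩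
  · have hmem : x (pick s P.1) ∈ window κ (x (pick s P.1)) := by cases κ <;> simp [window]
    exact Or.inr ⟨_, aIV_mem_gadgetDom.2 rfl, (vbV_adj_connV P s hmem).symm⟩

theorem ncard_closedNbhd_connV_inter_cliqueDom_le (hx : IsMulticoloredClique G x) (P : Pairs k)
    (s κ : Bool) :
    (insert (connV G P s κ) ((Hmcc k n G).neighborSet (connV G P s κ)) ∩ cliqueDom hx).ncard ≤
      n + 1 := by
  set c := pick s P.1
  calc _ ≤ ((fun t => vbV G c (gadV (x c) (aIV n t))) '' window κ (x c) ∪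
        (fun t => ebV G P (gadV (hx.edge P) (aIV n t))) '' window (!κ) (x c)).ncard :=
        Set.ncard_le_ncard ?_ (Set.toFinite _)
    _ ≤ (window κ (x c)).ncard + (window (!κ) (x c)).ncard :=
      (Set.ncard_union_le _ _).trans (add_le_add (Set.ncard_image_le (Set.toFinite _))
        (Set.ncard_image_le (Set.toFinite _)))
    _ = n + 1 := ncard_window_add_ncard_window_not κ (x c)
  rintro u ⟨rfl | hu, huS⟩
  · exact huS.elim
  rcases adj_connV_cases hu.symm with ⟨ℓ, t, rfl, ht⟩ | ⟨e, t, rfl, ht⟩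
  · obtain rfl := aIV_mem_gadgetDom.1 huS
    exact Or.inl ⟨t, ht, rfl⟩
  · obtain rfl := aIV_mem_gadgetDom.1 huS
    exact Or.inr ⟨t, hx.pick_edge P s ▸ ht, rfl⟩

theorem membLE_cliqueDom (hx : IsMulticoloredClique G x) :
    MembLE (Hmcc k n G) (cliqueDom hx) (n + 1) := by
  rintro (⟨i, z⟩ | ⟨P, z⟩ | ⟨P, s, κ⟩)
  · refine ncard_closedNbhd_inter_le_of_subset_image (membLE_blockDom (x i)) (vbV G i) z ?_
    rintro u huS (rfl | hu)
    · exact ⟨z, huS, Or.inl rfl, rfl⟩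
    · rcases adj_vbV_cases hu with ⟨z', rfl, hz'⟩ | ⟨_, _, _, rfl⟩
      exacts [⟨z', huS, Or.inr hz', rfl⟩, huS.elim]
  · refine ncard_closedNbhd_inter_le_of_subset_image (membLE_blockDom (hx.edge P)) (ebV G P) z ?_
    rintro u huS (rfl | hu)
    · exact ⟨z, huS, Or.inl rfl, rfl⟩
    · rcases adj_ebV_cases hu with ⟨z', rfl, hz'⟩ | ⟨_, _, _, rfl⟩
      exacts [⟨z', huS, Or.inr hz', rfl⟩, huS.elim]
  · exact ncard_closedNbhd_connV_inter_cliqueDom_le hx P s κ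

end Reduction

end MCCRed

open MCCRed in
theorem stmt_12_general (k n : ℕ) (hn : 1 ≤ n)
    (G : SimpleGraph (Fin k × Fin n))
    (hclq : ∃ x : Fin k → Fin n, ∀ i j : Fin k, i ≠ j → G.Adj (i, x i) (j, x j)) :
    ∃ S : Set (VHmcc k n G),
      IsDom (Hmcc k n G) S ∧ MembLE (Hmcc k n G) S (n + 1) := by
  obtain ⟨x, hx⟩ := hclq
  exact ⟨cliqueDom hx, isDom_cliqueDom hn hx, membLE_cliqueDom hx⟩

open MCCRed in
/-- If `G` (on vertex set `Fin k × Fin n`, color classes `V_i = {i} × Fin n`)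
has a multicolored clique, then `H` has a dominating set `S` with
`M(v,S) ≤ n+1` for every vertex `v` of `H`. -/
theorem stmt_12 (k n : ℕ) (hk : 2 ≤ k) (hn : 1 ≤ n)
    (G : SimpleGraph (Fin k × Fin n))
    (hclq : ∃ x : Fin k → Fin n, ∀ i j : Fin k, i ≠ j → G.Adj (i, x i) (j, x j)) :
    ∃ S : Set (VHmcc k n G),
      IsDom (Hmcc k n G) S ∧ MembLE (Hmcc k n G) S (n + 1) :=
  stmt_12_general k n hn G hclq
end

section
/- Let k, n, G and H be as in the context. For every dominating set S of H with M(v,S) ≤ n+1 for every vertex v of H, and for every block B of H (vertex-block or edge-block), C'(B) ⊆ S. -/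
namespace MCCRed

variable {k n : ℕ}

section Aux
variable {n : ℕ} {ι : Type}

lemma rB_b_left (q : Fin ((n + 1) * (n + 2))) (y : BVert n ι)
    (h : rB n ι (bV n ι q) y) : False := by
  rcases h with ⟨g, a, b, hx, -, -⟩ | ⟨g, t, hx, -⟩ | ⟨hx, -⟩ | ⟨p, hx, -⟩ | ⟨p, q', hx, -⟩ <;>
    simp [bV, gadV, fV, f'V, cV] at hx

lemma rB_b_right (q : Fin ((n + 1) * (n + 2))) (x : BVert n ι)
    (h : rB n ι x (bV n ι q)) :
    ∃ p : Fin (n + 1), x = cV n ι p ∧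
      p.val * (n + 2) ≤ q.val ∧ q.val < (p.val + 1) * (n + 2) := by
  rcases h with ⟨g, a, b, -, hy, -⟩ | ⟨g, t, -, hy⟩ | ⟨-, hy⟩ | ⟨p, -, hy⟩ |
    ⟨p, q', hx, hy, h1, h2⟩
  · exact absurd hy (by simp [bV, gadV])
  · exact absurd hy (by simp [bV, gadV])
  · exact absurd hy (by simp [bV, f'V])
  · exact absurd hy (by simp [bV, cV])
  · obtain rfl : q = q' := by simpa [bV] using hy
    exact ⟨p, hx, h1, h2⟩

lemma rB_cb (p : Fin (n + 1)) (q : Fin ((n + 1) * (n + 2)))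
    (h1 : p.val * (n + 2) ≤ q.val) (h2 : q.val < (p.val + 1) * (n + 2)) :
    rB n ι (cV n ι p) (bV n ι q) :=
  Or.inr (Or.inr (Or.inr (Or.inr ⟨p, q, rfl, rfl, h1, h2⟩)))

lemma window_unique (p p' : Fin (n + 1)) (q : ℕ)
    (h1 : p.val * (n + 2) ≤ q) (h2 : q < (p.val + 1) * (n + 2))
    (h1' : p'.val * (n + 2) ≤ q) (h2' : q < (p'.val + 1) * (n + 2)) : p = p' := by
  have e1 : p.val ≤ p'.val := Nat.le_of_lt_succ
    (Nat.lt_of_mul_lt_mul_right (lt_of_le_of_lt h1 h2'))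
  have e2 : p'.val ≤ p.val := Nat.le_of_lt_succ
    (Nat.lt_of_mul_lt_mul_right (lt_of_le_of_lt h1' h2))
  exact Fin.ext (le_antisymm e1 e2)

variable {k : ℕ} {G : SimpleGraph (Fin k × Fin n)}

lemma nb_vb (i : Fin k) (q : Fin ((n + 1) * (n + 2))) (u : VHmcc k n G)
    (h : (Hmcc k n G).Adj (vbV G i (bV n (Fin n) q)) u) :
    ∃ p : Fin (n + 1), u = vbV G i (cV n (Fin n) p) ∧
      p.val * (n + 2) ≤ q.val ∧ q.val < (p.val + 1) * (n + 2) := by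
  rw [Hmcc, SimpleGraph.fromRel_adj] at h
  obtain ⟨-, h | h⟩ := h
  · exfalso
    rcases h with ⟨i', a, b, hx, -, hr⟩ | ⟨P, a, b, hx, -, -⟩ | ⟨P, l, t, hx, -⟩ |
      ⟨P, l, t, hx, -⟩ | ⟨P, e, t, hx, -⟩
    · obtain ⟨rfl, rfl⟩ : i = i' ∧ bV n (Fin n) q = a := by simpa [vbV] using hx
      exact rB_b_left q b hr
    · simp [vbV, ebV] at hx
    · obtain ⟨-, hx⟩ : i = P.1.1 ∧ bV n (Fin n) q = gadV l (aIV n t) := by simpa [vbV] using hx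
      simp [bV, gadV] at hx
    · obtain ⟨-, hx⟩ : i = P.1.2 ∧ bV n (Fin n) q = gadV l (aIV n t) := by simpa [vbV] using hx
      simp [bV, gadV] at hx
    · simp [vbV, ebV] at hx
  · rcases h with ⟨i', a, b, hx, hy, hr⟩ | ⟨P, a, b, -, hy, -⟩ | ⟨P, l, t, -, hc⟩ |
      ⟨P, l, t, -, hc⟩ | ⟨P, e, t, -, hc⟩
    · obtain ⟨rfl, rfl⟩ : i = i' ∧ bV n (Fin n) q = b := by simpa [vbV] using hy
      obtain ⟨p, rfl, h1, h2⟩ := rB_b_right q a hr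
      exact ⟨p, hx, h1, h2⟩
    · exact absurd hy (by simp [vbV, ebV])
    · rcases hc with ⟨-, hy⟩ | ⟨-, hy⟩ <;> exact absurd hy (by simp [vbV, connV])
    · rcases hc with ⟨-, hy⟩ | ⟨-, hy⟩ <;> exact absurd hy (by simp [vbV, connV])
    · rcases hc with (⟨-, hy⟩ | ⟨-, hy⟩) | (⟨-, hy⟩ | ⟨-, hy⟩) <;>
        exact absurd hy (by simp [vbV, connV])

lemma nb_eb (P : Pairs k) (q : Fin ((n + 1) * (n + 2))) (u : VHmcc k n G)
    (h : (Hmcc k n G).Adj (ebV G P (bV n (EdgeIn G P) q)) u) :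
    ∃ p : Fin (n + 1), u = ebV G P (cV n (EdgeIn G P) p) ∧
      p.val * (n + 2) ≤ q.val ∧ q.val < (p.val + 1) * (n + 2) := by
  rw [Hmcc, SimpleGraph.fromRel_adj] at h
  obtain ⟨-, h | h⟩ := h
  · exfalso
    rcases h with ⟨i', a, b, hx, -, -⟩ | ⟨P', a, b, hx, -, hr⟩ | ⟨P', l, t, hx, -⟩ |
      ⟨P', l, t, hx, -⟩ | ⟨P', e, t, hx, -⟩
    · simp [vbV, ebV] at hx
    · have hx' : (⟨P, bV n (EdgeIn G P) q⟩ : Σ Q : Pairs k, BVert n (EdgeIn G Q)) =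
          ⟨P', a⟩ := by simpa [ebV] using hx
      obtain ⟨rfl, hb⟩ := Sigma.mk.inj_iff.mp hx'
      exact rB_b_left q b ((eq_of_heq hb) ▸ hr)
    · simp [vbV, ebV] at hx
    · simp [vbV, ebV] at hx
    · have hx' : (⟨P, bV n (EdgeIn G P) q⟩ : Σ Q : Pairs k, BVert n (EdgeIn G Q)) =
          ⟨P', gadV e (aIV n t)⟩ := by simpa [ebV] using hx
      obtain ⟨rfl, hb⟩ := Sigma.mk.inj_iff.mp hx'
      have := eq_of_heq hb
      simp [bV, gadV] at this
  · rcases h with ⟨i', a, b, -, hy, -⟩ | ⟨P', a, b, hx, hy, hr⟩ | ⟨P', l, t, -, hc⟩ |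
      ⟨P', l, t, -, hc⟩ | ⟨P', e, t, -, hc⟩
    · exact absurd hy (by simp [vbV, ebV])
    · have hy' : (⟨P, bV n (EdgeIn G P) q⟩ : Σ Q : Pairs k, BVert n (EdgeIn G Q)) =
          ⟨P', b⟩ := by simpa [ebV] using hy
      obtain ⟨rfl, hb⟩ := Sigma.mk.inj_iff.mp hy'
      obtain ⟨p, rfl, h1, h2⟩ := rB_b_right q a ((eq_of_heq hb) ▸ hr)
      exact ⟨p, hx, h1, h2⟩
    · rcases hc with ⟨-, hy⟩ | ⟨-, hy⟩ <;> exact absurd hy (by simp [ebV, connV])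
    · rcases hc with ⟨-, hy⟩ | ⟨-, hy⟩ <;> exact absurd hy (by simp [ebV, connV])
    · rcases hc with (⟨-, hy⟩ | ⟨-, hy⟩) | (⟨-, hy⟩ | ⟨-, hy⟩) <;>
        exact absurd hy (by simp [ebV, connV])

lemma key {W : Type*} [Finite W] (H : SimpleGraph W) (S : Set W)
    (hS : IsDom H S) (hM : MembLE H S (n + 1)) (c : W) (bw : Fin (n + 2) → W)
    (hbinj : Function.Injective bw) (hadj : ∀ s, H.Adj c (bw s))
    (honly : ∀ s u, H.Adj (bw s) u → u = c) : c ∈ S := by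
  by_contra hc
  have hbS : ∀ s, bw s ∈ S := by
    intro s
    rcases hS (bw s) with h | ⟨u, huS, hu⟩
    · exact h
    · exact absurd ((honly s u hu) ▸ huS) hc
  have hsub : Set.range bw ⊆ (insert c (H.neighborSet c)) ∩ S := by
    rintro _ ⟨s, rfl⟩
    exact ⟨Set.mem_insert_of_mem _ (hadj s), hbS s⟩
  have hcard : (Set.range bw).ncard = n + 2 := by
    rw [← Set.image_univ, Set.ncard_image_of_injective _ hbinj, Set.ncard_univ,
      Nat.card_eq_fintype_card, Fintype.card_fin]
  have := Set.ncard_le_ncard hsub (Set.toFinite _)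
  have := hM c
  omega

/-- The `s`-th element of the window of `p`. -/
def qf (n : ℕ) (p : Fin (n + 1)) (s : Fin (n + 2)) : Fin ((n + 1) * (n + 2)) :=
  ⟨p.val * (n + 2) + s.val, by
    calc p.val * (n + 2) + s.val < p.val * (n + 2) + (n + 2) := by omega
    _ = (p.val + 1) * (n + 2) := by ring
    _ ≤ (n + 1) * (n + 2) := Nat.mul_le_mul_right _ (by omega)⟩

lemma qf_window (p : Fin (n + 1)) (s : Fin (n + 2)) :
    p.val * (n + 2) ≤ (qf n p s).val ∧ (qf n p s).val < (p.val + 1) * (n + 2) := by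
  constructor
  · exact Nat.le_add_right _ _
  · show p.val * (n + 2) + s.val < (p.val + 1) * (n + 2)
    have := s.isLt
    nlinarith [s.isLt]

lemma qf_inj (p : Fin (n + 1)) : Function.Injective (qf n p) := by
  intro s s' h
  have : p.val * (n + 2) + s.val = p.val * (n + 2) + s'.val := congrArg Fin.val h
  exact Fin.ext (by omega)

end Aux

end MCCRed

open MCCRed in
/-- For every dominating set `S` of `H` with `M(v,S) ≤ n+1` for every vertex,
and every block `B` of `H` (vertex-block or edge-block), `C'(B) ⊆ S`. -/
theorem stmt_14 (k n : ℕ) (hk : 2 ≤ k) (hn : 1 ≤ n)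
    (G : SimpleGraph (Fin k × Fin n)) (S : Set (VHmcc k n G))
    (hS : IsDom (Hmcc k n G) S) (hM : MembLE (Hmcc k n G) S (n + 1)) :
    (∀ (i : Fin k) (p : Fin (n + 1)), vbV G i (cV n (Fin n) p) ∈ S) ∧
    (∀ (P : Pairs k) (p : Fin (n + 1)), ebV G P (cV n (EdgeIn G P) p) ∈ S) := by
  have hinst : Finite (VHmcc k n G) := by
    have : ∀ P : Pairs k, Finite (EdgeIn G P) := fun P => Subtype.finite
    infer_instance
  constructor
  · intro i p
    apply key (Hmcc k n G) S hS hM _ (fun s => vbV G i (bV n (Fin n) (qf n p s)))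
    · intro s s' h
      have : bV n (Fin n) (qf n p s) = bV n (Fin n) (qf n p s') := by
        simpa [vbV] using h
      exact qf_inj p (by simpa [bV] using this)
    · intro s
      rw [Hmcc, SimpleGraph.fromRel_adj]
      obtain ⟨h1, h2⟩ := qf_window p s
      refine ⟨by simp [vbV, cV, bV], Or.inl (Or.inl ⟨i, _, _, rfl, rfl, rB_cb p _ h1 h2⟩)⟩
    · intro s u hu
      obtain ⟨p', hu', h1', h2'⟩ := nb_vb i (qf n p s) u hu
      obtain ⟨h1, h2⟩ := qf_window p s
      rw [hu', window_unique p' p _ h1' h2' h1 h2]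
  · intro P p
    apply key (Hmcc k n G) S hS hM _ (fun s => ebV G P (bV n (EdgeIn G P) (qf n p s)))
    · intro s s' h
      have : bV n (EdgeIn G P) (qf n p s) = bV n (EdgeIn G P) (qf n p s') := by
        have h' : (⟨P, bV n (EdgeIn G P) (qf n p s)⟩ : Σ Q : Pairs k, BVert n (EdgeIn G Q)) =
            ⟨P, bV n (EdgeIn G P) (qf n p s')⟩ := by simpa [ebV] using h
        exact eq_of_heq (Sigma.mk.inj_iff.mp h').2
      exact qf_inj p (by simpa [bV] using this)
    · intro s
      rw [Hmcc, SimpleGraph.fromRel_adj]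
      obtain ⟨h1, h2⟩ := qf_window p s
      refine ⟨by simp [ebV, cV, bV], Or.inl (Or.inr (Or.inl ⟨P, _, _, rfl, rfl, rB_cb p _ h1 h2⟩))⟩
    · intro s u hu
      obtain ⟨p', hu', h1', h2'⟩ := nb_eb P (qf n p s) u hu
      obtain ⟨h1, h2⟩ := qf_window p s
      rw [hu', window_unique p' p _ h1' h2' h1 h2]
end

section
/- Let k, n, G and H be as in the context. For every dominating set S of H with M(v,S) ≤ n+1 for every vertex v of H, and for every block B of H (vertex-block or edge-block), the vertices f and f' of B are not in S. -/
open MCCRed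

lemma memb_aux {W : Type*} [Finite W] {n : ℕ} {ι : Type} (H : SimpleGraph W) (S : Set W)
    (φ : BVert n ι → W) (hφ : Function.Injective φ)
    (hA1 : ∀ (q : Fin ((n+1)*(n+2))) (u : W), H.Adj (φ (bV n ι q)) u →
      ∃ p : Fin (n+1), u = φ (cV n ι p) ∧ p.val*(n+2) ≤ q.val ∧ q.val < (p.val+1)*(n+2))
    (hA2 : ∀ (p : Fin (n+1)) (q : Fin ((n+1)*(n+2))),
      p.val*(n+2) ≤ q.val → q.val < (p.val+1)*(n+2) → H.Adj (φ (cV n ι p)) (φ (bV n ι q)))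
    (hB1 : ∀ p : Fin (n+1), H.Adj (φ (f'V n ι)) (φ (cV n ι p)))
    (hB2 : H.Adj (φ (f'V n ι)) (φ (fV n ι)))
    (hS : IsDom H S) (hM : MembLE H S (n+1)) :
    φ (fV n ι) ∉ S ∧ φ (f'V n ι) ∉ S := by
  have qdef : ∀ (p : Fin (n+1)) (s : Fin (n+2)), p.val*(n+2)+s.val < (n+1)*(n+2) := by
    intro p s
    have h1 : p.val + 1 ≤ n + 1 := p.isLt
    have h2 : (p.val+1)*(n+2) ≤ (n+1)*(n+2) := Nat.mul_le_mul_right _ h1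
    have h3 : p.val*(n+2)+s.val < (p.val+1)*(n+2) := by
      have hs := s.isLt; rw [add_mul, one_mul]; omega
    omega
  -- all c_p are in S
  have hc : ∀ p : Fin (n+1), φ (cV n ι p) ∈ S := by
    intro p
    by_contra hcp
    set Q : Fin (n+2) → Fin ((n+1)*(n+2)) := fun s => ⟨p.val*(n+2)+s.val, qdef p s⟩ with hQ
    have hQlt : ∀ s : Fin (n+2), (Q s).val < (p.val+1)*(n+2) := by
      intro s; have hs := s.isLt
      simp only [hQ]; rw [add_mul, one_mul]; omega
    have hQle : ∀ s : Fin (n+2), p.val*(n+2) ≤ (Q s).val := by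
      intro s; simp [hQ]
    have hbS : ∀ s, φ (bV n ι (Q s)) ∈ S := by
      intro s
      rcases hS (φ (bV n ι (Q s))) with h | ⟨u, huS, hadj⟩
      · exact h
      · obtain ⟨p', rfl, h1, h2⟩ := hA1 _ _ hadj
        have e1 : p'.val < p.val + 1 := by
          by_contra hco; push_neg at hco
          have := Nat.mul_le_mul_right (n+2) hco
          have := hQlt s; omega
        have e2 : p.val < p'.val + 1 := by
          by_contra hco; push_neg at hco
          have := Nat.mul_le_mul_right (n+2) hco
          have := hQle s; omega
        have : p' = p := Fin.ext (by omega)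
        subst this
        exact absurd huS hcp
    have hinj : Function.Injective (fun s : Fin (n+2) => φ (bV n ι (Q s))) := by
      intro s s' h
      have h2 := hφ h
      simp only [bV, Sum.inr.injEq, hQ, Fin.mk.injEq] at h2
      exact Fin.ext (by omega)
    have hsub : Set.range (fun s : Fin (n+2) => φ (bV n ι (Q s))) ⊆
        (insert (φ (cV n ι p)) (H.neighborSet (φ (cV n ι p)))) ∩ S := by
      rintro _ ⟨s, rfl⟩
      exact ⟨Set.mem_insert_of_mem _ (hA2 p (Q s) (hQle s) (hQlt s)), hbS s⟩
    have hcard : (Set.range (fun s : Fin (n+2) => φ (bV n ι (Q s)))).ncard = n+2 := by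
      rw [← Set.image_univ, Set.ncard_image_of_injective _ hinj, Set.ncard_univ]
      simp
    have hle := Set.ncard_le_ncard hsub (Set.toFinite _)
    have := hM (φ (cV n ι p))
    omega
  -- c range
  have hinjC : Function.Injective (fun p : Fin (n+1) => φ (cV n ι p)) := by
    intro p p' h
    have h2 := hφ h
    simpa [cV] using h2
  have hcardC : (Set.range (fun p : Fin (n+1) => φ (cV n ι p))).ncard = n+1 := by
    rw [← Set.image_univ, Set.ncard_image_of_injective _ hinjC, Set.ncard_univ]
    simp
  have hsubC : Set.range (fun p : Fin (n+1) => φ (cV n ι p)) ⊆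
      (insert (φ (f'V n ι)) (H.neighborSet (φ (f'V n ι)))) ∩ S := by
    rintro _ ⟨p, rfl⟩
    exact ⟨Set.mem_insert_of_mem _ (hB1 p), hc p⟩
  have key : ∀ v : W, v ∈ insert (φ (f'V n ι)) (H.neighborSet (φ (f'V n ι))) →
      (∀ p : Fin (n+1), v ≠ φ (cV n ι p)) → v ∉ S := by
    intro v hv hvc hvS
    have hnotmem : v ∉ Set.range (fun p : Fin (n+1) => φ (cV n ι p)) := by
      rintro ⟨p, rfl⟩; exact hvc p rfl
    have hsub2 : insert v (Set.range fun p : Fin (n+1) => φ (cV n ι p)) ⊆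
        (insert (φ (f'V n ι)) (H.neighborSet (φ (f'V n ι)))) ∩ S :=
      Set.insert_subset ⟨hv, hvS⟩ hsubC
    have hcard2 := Set.ncard_insert_of_notMem hnotmem (Set.toFinite _)
    have hle := Set.ncard_le_ncard hsub2 (Set.toFinite _)
    have := hM (φ (f'V n ι))
    omega
  constructor
  · refine key _ (Set.mem_insert_of_mem _ hB2) ?_
    intro p h
    have := hφ h
    simp [fV, cV] at this
  · refine key _ (Set.mem_insert _ _) ?_
    intro p h
    have := hφ h
    simp [f'V, cV] at this

lemma rb_cb {n : ℕ} {ι : Type} (p : Fin (n+1)) (q : Fin ((n+1)*(n+2)))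
    (h1 : p.val*(n+2) ≤ q.val) (h2 : q.val < (p.val+1)*(n+2)) :
    rB n ι (cV n ι p) (bV n ι q) :=
  Or.inr (Or.inr (Or.inr (Or.inr ⟨p, q, rfl, rfl, h1, h2⟩)))

lemma rb_f'c {n : ℕ} {ι : Type} (p : Fin (n+1)) : rB n ι (f'V n ι) (cV n ι p) :=
  Or.inr (Or.inr (Or.inr (Or.inl ⟨p, rfl, rfl⟩)))

lemma rb_ff' {n : ℕ} {ι : Type} : rB n ι (fV n ι) (f'V n ι) :=
  Or.inr (Or.inr (Or.inl ⟨rfl, rfl⟩))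

lemma adj_vb {k n : ℕ} (G : SimpleGraph (Fin k × Fin n)) (i : Fin k)
    {x y : BVert n (Fin n)} (hne : x ≠ y) (hr : rB n (Fin n) x y) :
    (Hmcc k n G).Adj (vbV G i x) (vbV G i y) := by
  rw [Hmcc, SimpleGraph.fromRel_adj]
  exact ⟨by simpa [vbV] using hne, Or.inl (Or.inl ⟨i, x, y, rfl, rfl, hr⟩)⟩

lemma adj_eb {k n : ℕ} (G : SimpleGraph (Fin k × Fin n)) (P : Pairs k)
    {x y : BVert n (EdgeIn G P)} (hne : x ≠ y) (hr : rB n (EdgeIn G P) x y) :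
    (Hmcc k n G).Adj (ebV G P x) (ebV G P y) := by
  rw [Hmcc, SimpleGraph.fromRel_adj]
  exact ⟨by simpa [ebV] using hne, Or.inl (Or.inr (Or.inl ⟨P, x, y, rfl, rfl, hr⟩))⟩

lemma inj_vb {k n : ℕ} (G : SimpleGraph (Fin k × Fin n)) (i : Fin k) :
    Function.Injective (vbV G i) := fun x y h => by simpa [vbV] using h

lemma inj_eb {k n : ℕ} (G : SimpleGraph (Fin k × Fin n)) (P : Pairs k) :
    Function.Injective (ebV G P) := fun x y h => by simpa [ebV] using h

set_option maxHeartbeats 1000000 in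
lemma hA1_vb {k n : ℕ} (G : SimpleGraph (Fin k × Fin n)) (i : Fin k)
    (q : Fin ((n+1)*(n+2))) (u : VHmcc k n G)
    (h : (Hmcc k n G).Adj (vbV G i (bV n (Fin n) q)) u) :
    ∃ p : Fin (n+1), u = vbV G i (cV n (Fin n) p) ∧
      p.val*(n+2) ≤ q.val ∧ q.val < (p.val+1)*(n+2) := by
  rw [Hmcc, SimpleGraph.fromRel_adj] at h
  obtain ⟨hne, h | h⟩ := h
  · simp only [rH, rB, rI, vbV, ebV, connV, gadV, fV, f'V, cV, bV, h1V, h2V, aIV, dIV, padV,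
      Sum.inl.injEq, Sum.inr.injEq, Prod.mk.injEq, reduceCtorEq, and_false, false_and,
      exists_false, false_or, or_false, exists_eq_left, exists_eq_left', exists_eq_right,
      exists_eq_right', exists_and_left, exists_and_right, and_assoc, true_and, and_true] at h
  · simp only [rH, rB, rI, vbV, ebV, connV, gadV, fV, f'V, cV, bV, h1V, h2V, aIV, dIV, padV,
      Sum.inl.injEq, Sum.inr.injEq, Prod.mk.injEq, reduceCtorEq, and_false, false_and,
      exists_false, false_or, or_false, exists_eq_left, exists_eq_left', exists_eq_right,
      exists_eq_right', exists_and_left, exists_and_right, and_assoc, true_and, and_true] at h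
    obtain ⟨i1, a, rfl, rfl, p, rfl, h1, h2⟩ := h
    exact ⟨p, rfl, h1, h2⟩

set_option maxHeartbeats 1000000 in
lemma hA1_eb {k n : ℕ} (G : SimpleGraph (Fin k × Fin n)) (P : Pairs k)
    (q : Fin ((n+1)*(n+2))) (u : VHmcc k n G)
    (h : (Hmcc k n G).Adj (ebV G P (bV n (EdgeIn G P) q)) u) :
    ∃ p : Fin (n+1), u = ebV G P (cV n (EdgeIn G P) p) ∧
      p.val*(n+2) ≤ q.val ∧ q.val < (p.val+1)*(n+2) := by
  rw [Hmcc, SimpleGraph.fromRel_adj] at h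
  obtain ⟨hne, h | h⟩ := h
  · simp only [rH, rB, rI, vbV, ebV, connV, gadV, fV, f'V, cV, bV, h1V, h2V, aIV, dIV, padV,
      Sum.inl.injEq, Sum.inr.injEq, Prod.mk.injEq, Sigma.mk.inj_iff, heq_eq_eq,
      reduceCtorEq, and_false, false_and,
      exists_false, false_or, or_false, exists_eq_left, exists_eq_left', exists_eq_right,
      exists_eq_right', exists_and_left, exists_and_right, and_assoc, true_and, and_true] at h
  · simp only [rH, rB, rI, vbV, ebV, connV, gadV, fV, f'V, cV, bV, h1V, h2V, aIV, dIV, padV,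
      Sum.inl.injEq, Sum.inr.injEq, Prod.mk.injEq, Sigma.mk.inj_iff, heq_eq_eq,
      reduceCtorEq, and_false, false_and,
      exists_false, false_or, or_false, exists_eq_left, exists_eq_left', exists_eq_right,
      exists_eq_right', exists_and_left, exists_and_right, and_assoc, true_and, and_true] at h
    obtain ⟨P1, a, hu, hP, x, hx, hcase⟩ := h
    subst hP
    obtain rfl := eq_of_heq hx
    simp only [Sum.inl.injEq, Sum.inr.injEq, Prod.mk.injEq, reduceCtorEq, and_false, false_and,
      exists_false, false_or, or_false, exists_const, exists_eq_left, exists_eq_left',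
      exists_eq_right, exists_eq_right'] at hcase
    obtain ⟨p, rfl, h1, h2⟩ := hcase
    exact ⟨p, hu, h1, h2⟩


open MCCRed in
/-- For every dominating set `S` of `H` with `M(v,S) ≤ n+1` for every vertex,
and every block `B` of `H` (vertex-block or edge-block), the vertices `f` and
`f'` of `B` are not in `S`. -/
theorem stmt_15 (k n : ℕ) (hk : 2 ≤ k) (hn : 1 ≤ n)
    (G : SimpleGraph (Fin k × Fin n)) (S : Set (VHmcc k n G))
    (hS : IsDom (Hmcc k n G) S) (hM : MembLE (Hmcc k n G) S (n + 1)) :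
    (∀ i : Fin k, vbV G i (fV n (Fin n)) ∉ S ∧ vbV G i (f'V n (Fin n)) ∉ S) ∧
    (∀ P : Pairs k,
      ebV G P (fV n (EdgeIn G P)) ∉ S ∧ ebV G P (f'V n (EdgeIn G P)) ∉ S) := by
  refine ⟨fun i => ?_, fun P => ?_⟩
  · exact memb_aux (Hmcc k n G) S (vbV G i) (inj_vb G i)
      (hA1_vb G i)
      (fun p q h1 h2 => adj_vb G i (by simp [cV, bV]) (rb_cb p q h1 h2))
      (fun p => adj_vb G i (by simp [f'V, cV]) (rb_f'c p))
      ((adj_vb G i (by simp [fV, f'V]) rb_ff').symm)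
      hS hM
  · exact memb_aux (Hmcc k n G) S (ebV G P) (inj_eb G P)
      (hA1_eb G P)
      (fun p q h1 h2 => adj_eb G P (by simp [cV, bV]) (rb_cb p q h1 h2))
      (fun p => adj_eb G P (by simp [f'V, cV]) (rb_f'c p))
      ((adj_eb G P (by simp [fV, f'V]) rb_ff').symm)
      hS hM
end
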